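/- arXiv:1505.00843 — 8 statements merged into one kernel-verified Lean document; each statement's English description precedes it below -/
import Mathlib

section
/- Define F_0(y) = 1, F_m(y) = 0 for m < 0, and F_m(y) = (b + d - y(a+c) q^(m-1)) F_{m-1}(y) + (q^(m-1) - 1)(bd - ac q^(m-2) y^2) F_{m-2}(y) for m > 0. Then for all m ≥ 0, F_m(y) = Σ_{i=0}^m (-1)^i [m choose i]_q q^(i choose 2) y^i A_i(a,c) B_{m-i}(b,d), where A_i(a,c) = Σ_{j=0}^i [i choose j]_{1/q} a^j c^(i-j) and B_k(b,d) = Σ_{j=0}^k [k choose j]_q b^j d^(k-j). -/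
noncomputable section
namespace Stmt3

/-- The field of rational functions in the indeterminates `a, b, c, d, y, q` over `ℚ`. -/
abbrev K : Type := FractionRing (MvPolynomial (Fin 6) ℚ)

def a : K := algebraMap (MvPolynomial (Fin 6) ℚ) K (MvPolynomial.X 0)
def b : K := algebraMap (MvPolynomial (Fin 6) ℚ) K (MvPolynomial.X 1)
def c : K := algebraMap (MvPolynomial (Fin 6) ℚ) K (MvPolynomial.X 2)
def d : K := algebraMap (MvPolynomial (Fin 6) ℚ) K (MvPolynomial.X 3)
def y : K := algebraMap (MvPolynomial (Fin 6) ℚ) K (MvPolynomial.X 4)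
def q : K := algebraMap (MvPolynomial (Fin 6) ℚ) K (MvPolynomial.X 5)

/-- q-factorial with parameter `t`. -/
def qfact (t : K) : ℕ → K
  | 0 => 1
  | n + 1 => qfact t n * ∑ j ∈ Finset.range (n + 1), t ^ j

/-- Gaussian binomial coefficient `[m choose i]_t`. -/
def qbinom (t : K) (m i : ℕ) : K :=
  if i ≤ m then qfact t m / (qfact t i * qfact t (m - i)) else 0

/-- `A_i(a,c) = Σ_{j=0}^i [i choose j]_{1/q} a^j c^(i-j)`. -/
def A (i : ℕ) : K := ∑ j ∈ Finset.range (i + 1), qbinom q⁻¹ i j * a ^ j * c ^ (i - j)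

/-- `B_k(b,d) = Σ_{j=0}^k [k choose j]_q b^j d^(k-j)`. -/
def B (k : ℕ) : K := ∑ j ∈ Finset.range (k + 1), qbinom q k j * b ^ j * d ^ (k - j)

/-- `F_0(y) = 1`, `F_m(y) = 0` for `m < 0`, and
`F_m(y) = (b + d - y(a+c) q^(m-1)) F_{m-1}(y) + (q^(m-1) - 1)(bd - ac q^(m-2) y^2) F_{m-2}(y)`
(for `m = 1` the second term vanishes since `F_{-1} = 0`). -/
def F : ℕ → K
  | 0 => 1
  | 1 => (b + d - y * (a + c) * q ^ (0 : ℕ)) * F 0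
  | m + 2 => (b + d - y * (a + c) * q ^ (m + 1)) * F (m + 1) +
      (q ^ (m + 1) - 1) * (b * d - a * c * q ^ m * y ^ 2) * F m


/-! ### Auxiliary lemmas -/

set_option linter.unusedSectionVars false

def e (t : K) (n : ℕ) : K := ∑ j ∈ Finset.range n, t ^ j

lemma e_succ (t : K) (n : ℕ) : e t (n + 1) = e t n + t ^ n :=
  Finset.sum_range_succ _ _

lemma e_add (t : K) (m k : ℕ) : e t (m + k) = e t m + t ^ m * e t k := by
  induction k with
  | zero => simp [e]
  | succ k ih =>
      rw [show m + (k + 1) = (m + k) + 1 from rfl, e_succ, ih, e_succ, pow_add]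
      ring

lemma qfact_succ (t : K) (n : ℕ) : qfact t (n + 1) = qfact t n * e t (n + 1) := rfl

lemma geom (t : K) (n : ℕ) : e t n * (t - 1) = t ^ n - 1 := geom_sum_mul t n

section NZ
variable {t : K} (ht : ∀ n : ℕ, e t (n + 1) ≠ 0)
include ht

lemma qfact_ne_zero (n : ℕ) : qfact t n ≠ 0 := by
  induction n with
  | zero => exact one_ne_zero
  | succ n ih => rw [qfact_succ]; exact mul_ne_zero ih (ht n)

omit ht in
lemma qbinom_of_le {m i : ℕ} (h : i ≤ m) :
    qbinom t m i = qfact t m / (qfact t i * qfact t (m - i)) := if_pos h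

omit ht in
lemma qbinom_of_gt {m i : ℕ} (h : m < i) : qbinom t m i = 0 := if_neg (by omega)

lemma qbinom_spec {m i : ℕ} (h : i ≤ m) :
    qbinom t m i * (qfact t i * qfact t (m - i)) = qfact t m := by
  rw [qbinom_of_le h, div_mul_cancel₀]
  exact mul_ne_zero (qfact_ne_zero ht i) (qfact_ne_zero ht (m - i))

lemma qbinom_zero (m : ℕ) : qbinom t m 0 = 1 := by
  have h := qbinom_spec ht (Nat.zero_le m)
  rw [Nat.sub_zero, show qfact t 0 = 1 from rfl, one_mul] at h
  have := qfact_ne_zero ht m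
  field_simp at h
  exact h

lemma qbinom_self (m : ℕ) : qbinom t m m = 1 := by
  have h := qbinom_spec ht (le_refl m)
  rw [Nat.sub_self, show qfact t 0 = 1 from rfl, mul_one] at h
  have := qfact_ne_zero ht m
  field_simp at h
  exact h

lemma qbinom_pascal {m i : ℕ} (h : i ≤ m) :
    qbinom t (m + 1) (i + 1) = qbinom t m (i + 1) + t ^ (m - i) * qbinom t m i := by
  rcases eq_or_lt_of_le h with rfl | hlt
  · rw [qbinom_self ht, qbinom_self ht, qbinom_of_gt (by omega)]
    simp
  · obtain ⟨j, rfl⟩ : ∃ j, m = (i + 1) + j := ⟨m - (i + 1), by omega⟩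
    have h1 : i + 1 + j + 1 - (i + 1) = j + 1 := by omega
    have h2 : i + 1 + j - (i + 1) = j := by omega
    have h3 : i + 1 + j - i = j + 1 := by omega
    rw [h3]
    have hZ : qfact t (i + 1) * qfact t (j + 1) ≠ 0 :=
      mul_ne_zero (qfact_ne_zero ht _) (qfact_ne_zero ht _)
    apply mul_right_cancel₀ hZ
    have sA := qbinom_spec ht (show i + 1 ≤ i + 1 + j + 1 by omega)
    rw [h1] at sA
    have sB := qbinom_spec ht (show i + 1 ≤ i + 1 + j by omega)
    rw [h2] at sB
    have sC := qbinom_spec ht (show i ≤ i + 1 + j by omega)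
    rw [h3] at sC
    have em : e t (i + 1 + j + 1) = e t (j + 1) + t ^ (j + 1) * e t (i + 1) := by
      rw [show i + 1 + j + 1 = (j + 1) + (i + 1) by omega, e_add]
    calc qbinom t (i + 1 + j + 1) (i + 1) * (qfact t (i + 1) * qfact t (j + 1))
        = qfact t (i + 1 + j + 1) := sA
      _ = qfact t (i + 1 + j) * (e t (j + 1) + t ^ (j + 1) * e t (i + 1)) := by
          rw [qfact_succ, em]
      _ = (qbinom t (i + 1 + j) (i + 1) * (qfact t (i + 1) * qfact t j)) * e t (j + 1)
          + t ^ (j + 1) * ((qbinom t (i + 1 + j) i * (qfact t i * qfact t (j + 1))) * e t (i + 1)) := by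
          rw [sB, sC]; ring
      _ = (qbinom t (i + 1 + j) (i + 1) + t ^ (j + 1) * qbinom t (i + 1 + j) i)
          * (qfact t (i + 1) * qfact t (j + 1)) := by
          rw [qfact_succ t j, qfact_succ t i]; ring

lemma qbinom_I1 {n k : ℕ} (h : k ≤ n + 1) :
    qbinom t (n + 1) k * (t ^ (n + 1 - k) - 1) = (t ^ (n + 1) - 1) * qbinom t n k := by
  rcases eq_or_lt_of_le h with rfl | hlt
  · rw [qbinom_self ht, qbinom_of_gt (by omega)]
    simp
  · obtain ⟨j, rfl⟩ : ∃ j, n = k + j := ⟨n - k, by omega⟩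
    have h1 : k + j + 1 - k = j + 1 := by omega
    have h2 : k + j - k = j := by omega
    rw [h1]
    have core : qbinom t (k + j + 1) k * e t (j + 1) = e t (k + j + 1) * qbinom t (k + j) k := by
      have hZ : qfact t k * qfact t (j + 1) ≠ 0 :=
        mul_ne_zero (qfact_ne_zero ht _) (qfact_ne_zero ht _)
      apply mul_right_cancel₀ hZ
      have sA := qbinom_spec ht (show k ≤ k + j + 1 by omega)
      rw [h1] at sA
      have sB := qbinom_spec ht (show k ≤ k + j by omega)
      rw [h2] at sB
      calc qbinom t (k + j + 1) k * e t (j + 1) * (qfact t k * qfact t (j + 1))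
          = (qbinom t (k + j + 1) k * (qfact t k * qfact t (j + 1))) * e t (j + 1) := by ring
        _ = qfact t (k + j + 1) * e t (j + 1) := by rw [sA]
        _ = (qfact t (k + j) * e t (k + j + 1)) * e t (j + 1) := by rw [qfact_succ]
        _ = e t (k + j + 1) * ((qbinom t (k + j) k * (qfact t k * qfact t j)) * e t (j + 1)) := by
            rw [sB]; ring
        _ = e t (k + j + 1) * qbinom t (k + j) k * (qfact t k * qfact t (j + 1)) := by
            rw [qfact_succ t j]; ring
    rw [← geom t (j + 1), ← geom t (k + j + 1)]
    linear_combination (t - 1) * core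

lemma qbinom_I2 {n k : ℕ} (h : k ≤ n) :
    qbinom t (n + 1) (k + 1) * (t ^ (k + 1) - 1) = (t ^ (n + 1) - 1) * qbinom t n k := by
  obtain ⟨j, rfl⟩ : ∃ j, n = k + j := ⟨n - k, by omega⟩
  have h1 : k + j + 1 - (k + 1) = j := by omega
  have h2 : k + j - k = j := by omega
  have core : qbinom t (k + j + 1) (k + 1) * e t (k + 1)
      = e t (k + j + 1) * qbinom t (k + j) k := by
    have hZ : qfact t (k + 1) * qfact t j ≠ 0 :=
      mul_ne_zero (qfact_ne_zero ht _) (qfact_ne_zero ht _)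
    apply mul_right_cancel₀ hZ
    have sA := qbinom_spec ht (show k + 1 ≤ k + j + 1 by omega)
    rw [h1] at sA
    have sB := qbinom_spec ht (show k ≤ k + j by omega)
    rw [h2] at sB
    calc qbinom t (k + j + 1) (k + 1) * e t (k + 1) * (qfact t (k + 1) * qfact t j)
        = (qbinom t (k + j + 1) (k + 1) * (qfact t (k + 1) * qfact t j)) * e t (k + 1) := by ring
      _ = qfact t (k + j + 1) * e t (k + 1) := by rw [sA]
      _ = (qfact t (k + j) * e t (k + j + 1)) * e t (k + 1) := by rw [qfact_succ]
      _ = e t (k + j + 1) * ((qbinom t (k + j) k * (qfact t k * qfact t j)) * e t (k + 1)) := by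
          rw [sB]; ring
      _ = e t (k + j + 1) * qbinom t (k + j) k * (qfact t (k + 1) * qfact t j) := by
          rw [qfact_succ t k]; ring
  rw [← geom t (k + 1), ← geom t (k + j + 1)]
  linear_combination (t - 1) * core

end NZ

/-! ### Transcendence facts -/

lemma q_ne_zero : q ≠ 0 := by
  intro h
  have h' : algebraMap (MvPolynomial (Fin 6) ℚ) K (MvPolynomial.X 5) =
      algebraMap (MvPolynomial (Fin 6) ℚ) K 0 := by simpa [q] using h
  exact MvPolynomial.X_ne_zero 5 (IsFractionRing.injective (MvPolynomial (Fin 6) ℚ) K h')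

lemma eq_ne_zero (n : ℕ) : e q (n + 1) ≠ 0 := by
  intro h
  have : (∑ j ∈ Finset.range (n + 1), (MvPolynomial.X 5 : MvPolynomial (Fin 6) ℚ) ^ j) = 0 := by
    apply IsFractionRing.injective (MvPolynomial (Fin 6) ℚ) K
    rw [map_sum, map_zero]
    simpa [q, e] using h
  have h2 := congrArg (MvPolynomial.eval (fun _ => (0 : ℚ))) this
  simp [Finset.sum_range_succ'] at h2

lemma eqi_ne_zero (n : ℕ) : e q⁻¹ (n + 1) ≠ 0 := by
  have key : e q⁻¹ (n + 1) * q ^ n = e q (n + 1) := by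
    rw [e, e, Finset.sum_mul]
    rw [← Finset.sum_range_reflect (fun j => q ^ j) (n + 1)]
    apply Finset.sum_congr rfl
    intro j hj
    rw [Finset.mem_range] at hj
    rw [inv_pow, inv_mul_eq_div, show n + 1 - 1 - j = n - j by omega, pow_sub₀ q q_ne_zero (by omega), div_eq_mul_inv]
  intro h
  apply eq_ne_zero n
  rw [← key, h, zero_mul]

/-! ### Rogers–Szegő type polynomials -/

def Hp (t u v : K) (n : ℕ) : K := ∑ j ∈ Finset.range (n + 1), qbinom t n j * u ^ j * v ^ (n - j)

lemma A_eq (i : ℕ) : A i = Hp q⁻¹ a c i := rfl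
lemma B_eq (k : ℕ) : B k = Hp q b d k := rfl

section HpRec
variable {t : K} (ht : ∀ n : ℕ, e t (n + 1) ≠ 0) (u v : K)
include ht

lemma Hp_rec (n : ℕ) :
    Hp t u v (n + 2) = (u + v) * Hp t u v (n + 1) + (t ^ (n + 1) - 1) * u * v * Hp t u v n := by
  have step1 : Hp t u v (n + 2)
      = (∑ j ∈ Finset.range (n + 2), qbinom t (n + 2) (j + 1) * u ^ (j + 1) * v ^ (n + 1 - j))
        + v ^ (n + 2) := by
    rw [Hp, Finset.sum_range_succ' _ (n + 2)]
    congr 1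
    · apply Finset.sum_congr rfl
      intro j hj
      rw [show n + 2 - (j + 1) = n + 1 - j by omega]
    · simp [qbinom_zero ht]
  have split : ∀ j ∈ Finset.range (n + 2),
      qbinom t (n + 2) (j + 1) * u ^ (j + 1) * v ^ (n + 1 - j)
      = qbinom t (n + 1) (j + 1) * u ^ (j + 1) * v ^ (n + 1 - j)
        + t ^ (n + 1 - j) * qbinom t (n + 1) j * u ^ (j + 1) * v ^ (n + 1 - j) := by
    intro j hj
    rw [Finset.mem_range] at hj
    rw [qbinom_pascal ht (by omega : j ≤ n + 1)]
    ring
  have sumA : (∑ j ∈ Finset.range (n + 2), qbinom t (n + 1) (j + 1) * u ^ (j + 1) * v ^ (n + 1 - j))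
      + v ^ (n + 2) = v * Hp t u v (n + 1) := by
    rw [Hp, Finset.mul_sum]
    rw [Finset.sum_range_succ' (fun k => v * (qbinom t (n + 1) k * u ^ k * v ^ (n + 1 - k))) (n + 1)]
    rw [Finset.sum_range_succ (fun j => qbinom t (n + 1) (j + 1) * u ^ (j + 1) * v ^ (n + 1 - j)) (n + 1)]
    rw [qbinom_of_gt (show n + 1 < n + 1 + 1 by omega), zero_mul, zero_mul, add_zero]
    congr 1
    · apply Finset.sum_congr rfl
      intro j hj
      rw [Finset.mem_range] at hj
      rw [show n + 1 - j = (n - j) + 1 by omega, show n + 1 - (j + 1) = n - j by omega, pow_succ]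
      ring
    · simp [qbinom_zero ht]
      ring
  have sumB : (∑ j ∈ Finset.range (n + 2),
        t ^ (n + 1 - j) * qbinom t (n + 1) j * u ^ (j + 1) * v ^ (n + 1 - j))
      = u * Hp t u v (n + 1) + (t ^ (n + 1) - 1) * u * v * Hp t u v n := by
    have tsplit : ∀ j ∈ Finset.range (n + 2),
        t ^ (n + 1 - j) * qbinom t (n + 1) j * u ^ (j + 1) * v ^ (n + 1 - j)
        = qbinom t (n + 1) j * u ^ (j + 1) * v ^ (n + 1 - j)
          + (t ^ (n + 1) - 1) * qbinom t n j * u ^ (j + 1) * v ^ (n + 1 - j) := by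
      intro j hj
      rw [Finset.mem_range] at hj
      have := qbinom_I1 ht (show j ≤ n + 1 by omega)
      linear_combination u ^ (j + 1) * v ^ (n + 1 - j) * this
    rw [Finset.sum_congr rfl tsplit, Finset.sum_add_distrib]
    congr 1
    · rw [Hp, Finset.mul_sum]
      apply Finset.sum_congr rfl
      intro j hj
      ring
    · rw [Finset.sum_range_succ
        (fun j => (t ^ (n + 1) - 1) * qbinom t n j * u ^ (j + 1) * v ^ (n + 1 - j)) (n + 1)]
      rw [qbinom_of_gt (show n < n + 1 by omega), mul_zero, zero_mul, zero_mul, add_zero]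
      rw [Hp, Finset.mul_sum]
      apply Finset.sum_congr rfl
      intro j hj
      rw [Finset.mem_range] at hj
      rw [show n + 1 - j = (n - j) + 1 by omega, pow_succ]
      ring
  rw [step1, Finset.sum_congr rfl split, Finset.sum_add_distrib]
  linear_combination sumA + sumB

end HpRec

lemma B_mul (k : ℕ) : (b + d) * B k = B (k + 1) + (1 - q ^ k) * (b * d) * B (k - 1) := by
  cases k with
  | zero =>
      simp only [pow_zero, sub_self, zero_mul, add_zero, Nat.zero_sub]
      rw [B, B]
      rw [Finset.sum_range_succ, Finset.sum_range_succ, Finset.sum_range_succ]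
      simp [qbinom_zero eq_ne_zero, qbinom_self eq_ne_zero]
      ring
  | succ k =>
      rw [B_eq, B_eq, B_eq, Hp_rec eq_ne_zero b d k, Nat.add_sub_cancel]
      ring

lemma A_mul (i : ℕ) : (a + c) * A i = A (i + 1) + (1 - (q⁻¹) ^ i) * (a * c) * A (i - 1) := by
  cases i with
  | zero =>
      simp only [pow_zero, sub_self, zero_mul, add_zero, Nat.zero_sub]
      rw [A, A]
      rw [Finset.sum_range_succ, Finset.sum_range_succ, Finset.sum_range_succ]
      simp [qbinom_zero eqi_ne_zero, qbinom_self eqi_ne_zero]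
      ring
  | succ i =>
      rw [A_eq, A_eq, A_eq, Hp_rec eqi_ne_zero a c i, Nat.add_sub_cancel]
      ring

/-! ### The sum side -/

def S (m : ℕ) : K := ∑ i ∈ Finset.range (m + 1),
  (-1 : K) ^ i * qbinom q m i * q ^ (Nat.choose i 2) * y ^ i * A i * B (m - i)

set_option maxHeartbeats 1000000 in
lemma S_rec (n : ℕ) : S (n + 2) = (b + d - y * (a + c) * q ^ (n + 1)) * S (n + 1) +
    (q ^ (n + 1) - 1) * (b * d - a * c * q ^ n * y ^ 2) * S n := by
  have h1 : (b + d) * S (n + 1)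
      = (∑ i ∈ Finset.range (n + 2), (-1 : K) ^ i * qbinom q (n + 1) i * q ^ (Nat.choose i 2)
          * y ^ i * A i * B (n + 2 - i))
        + (∑ i ∈ Finset.range (n + 2), (-1 : K) ^ i * qbinom q (n + 1) i * q ^ (Nat.choose i 2)
          * y ^ i * (1 - q ^ (n + 1 - i)) * (b * d) * A i * B (n - i)) := by
    rw [S, Finset.mul_sum, ← Finset.sum_add_distrib]
    apply Finset.sum_congr rfl
    intro i hi
    rw [Finset.mem_range] at hi
    have hb := B_mul (n + 1 - i)
    rw [show n + 1 - i + 1 = n + 2 - i by omega, show n + 1 - i - 1 = n - i by omega] at hb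
    linear_combination ((-1 : K) ^ i * qbinom q (n + 1) i * q ^ (Nat.choose i 2) * y ^ i * A i) * hb
  have h2 : (y * (a + c) * q ^ (n + 1)) * S (n + 1)
      = (∑ i ∈ Finset.range (n + 2), (-1 : K) ^ i * qbinom q (n + 1) i * q ^ (Nat.choose i 2)
          * q ^ (n + 1) * y ^ (i + 1) * A (i + 1) * B (n + 1 - i))
        + (∑ i ∈ Finset.range (n + 2), (-1 : K) ^ i * qbinom q (n + 1) i * q ^ (Nat.choose i 2)
          * q ^ (n + 1) * y ^ (i + 1) * (1 - (q⁻¹) ^ i) * (a * c) * A (i - 1) * B (n + 1 - i)) := by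
    rw [S, Finset.mul_sum, ← Finset.sum_add_distrib]
    apply Finset.sum_congr rfl
    intro i hi
    have ha := A_mul i
    linear_combination ((-1 : K) ^ i * qbinom q (n + 1) i * q ^ (Nat.choose i 2) * q ^ (n + 1)
      * y ^ (i + 1) * B (n + 1 - i)) * ha
  have h3 : (∑ i ∈ Finset.range (n + 2), (-1 : K) ^ i * qbinom q (n + 1) i * q ^ (Nat.choose i 2)
          * y ^ i * (1 - q ^ (n + 1 - i)) * (b * d) * A i * B (n - i))
        + (q ^ (n + 1) - 1) * (b * d) * S n = 0 := by
    have pad : (q ^ (n + 1) - 1) * (b * d) * S n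
        = ∑ i ∈ Finset.range (n + 2), (q ^ (n + 1) - 1) * (b * d)
            * ((-1 : K) ^ i * qbinom q n i * q ^ (Nat.choose i 2) * y ^ i * A i * B (n - i)) := by
      rw [S, Finset.mul_sum, Finset.sum_range_succ
        (fun i => (q ^ (n + 1) - 1) * (b * d)
          * ((-1 : K) ^ i * qbinom q n i * q ^ (Nat.choose i 2) * y ^ i * A i * B (n - i))) (n + 1),
        qbinom_of_gt (show n < n + 1 by omega)]
      simp
    rw [pad, ← Finset.sum_add_distrib]
    apply Finset.sum_eq_zero
    intro i hi
    rw [Finset.mem_range] at hi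
    have hI := qbinom_I1 eq_ne_zero (show i ≤ n + 1 by omega)
    linear_combination (-(-1 : K) ^ i * q ^ (Nat.choose i 2) * y ^ i * (b * d) * A i * B (n - i)) * hI
  have h4 : (∑ i ∈ Finset.range (n + 2), (-1 : K) ^ i * qbinom q (n + 1) i * q ^ (Nat.choose i 2)
          * q ^ (n + 1) * y ^ (i + 1) * (1 - (q⁻¹) ^ i) * (a * c) * A (i - 1) * B (n + 1 - i))
        + (q ^ (n + 1) - 1) * (a * c * q ^ n * y ^ 2) * S n = 0 := by
    rw [Finset.sum_range_succ'
      (fun i => (-1 : K) ^ i * qbinom q (n + 1) i * q ^ (Nat.choose i 2)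
        * q ^ (n + 1) * y ^ (i + 1) * (1 - (q⁻¹) ^ i) * (a * c) * A (i - 1) * B (n + 1 - i)) (n + 1)]
    have z0 : (-1 : K) ^ 0 * qbinom q (n + 1) 0 * q ^ (Nat.choose 0 2)
        * q ^ (n + 1) * y ^ (0 + 1) * (1 - (q⁻¹) ^ 0) * (a * c) * A (0 - 1) * B (n + 1 - 0) = 0 := by
      simp
    rw [z0, add_zero, S, Finset.mul_sum, ← Finset.sum_add_distrib]
    apply Finset.sum_eq_zero
    intro i hi
    rw [Finset.mem_range] at hi
    have hI := qbinom_I2 eq_ne_zero (show i ≤ n by omega)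
    have hinv : q ^ (i + 1) * (1 - (q⁻¹) ^ (i + 1)) = q ^ (i + 1) - 1 := by
      rw [inv_pow, mul_sub, mul_one, mul_inv_cancel₀ (pow_ne_zero _ q_ne_zero)]
    have hC : Nat.choose (i + 1) 2 = Nat.choose i 2 + i := by
      rw [Nat.choose_succ_succ, Nat.choose_one_right, Nat.add_comm]
    rw [hC, show i + 1 + 1 = i + 2 from rfl, show i + 1 - 1 = i from rfl,
      show n + 1 - (i + 1) = n - i by omega]
    calc (-1 : K) ^ (i + 1) * qbinom q (n + 1) (i + 1) * q ^ (Nat.choose i 2 + i)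
          * q ^ (n + 1) * y ^ (i + 2) * (1 - (q⁻¹) ^ (i + 1)) * (a * c) * A i * B (n - i)
        + (q ^ (n + 1) - 1) * (a * c * q ^ n * y ^ 2)
          * ((-1 : K) ^ i * qbinom q n i * q ^ (Nat.choose i 2) * y ^ i * A i * B (n - i))
        = (-(-1 : K) ^ i * q ^ (Nat.choose i 2) * q ^ n * y ^ (i + 2) * (a * c) * A i * B (n - i))
            * (qbinom q (n + 1) (i + 1) * (q ^ (i + 1) * (1 - (q⁻¹) ^ (i + 1))))
          + (q ^ (n + 1) - 1) * (a * c * q ^ n * y ^ 2)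
            * ((-1 : K) ^ i * qbinom q n i * q ^ (Nat.choose i 2) * y ^ i * A i * B (n - i)) := by
          rw [pow_add, pow_add]; ring
      _ = 0 := by
          rw [hinv]
          linear_combination (-(-1 : K) ^ i * q ^ (Nat.choose i 2) * q ^ n * y ^ (i + 2)
            * (a * c) * A i * B (n - i)) * hI
  have h5 : (∑ i ∈ Finset.range (n + 2), (-1 : K) ^ i * qbinom q (n + 1) i * q ^ (Nat.choose i 2)
          * y ^ i * A i * B (n + 2 - i))
      = S (n + 2)
        + (∑ i ∈ Finset.range (n + 2), (-1 : K) ^ i * qbinom q (n + 1) i * q ^ (Nat.choose i 2)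
          * q ^ (n + 1) * y ^ (i + 1) * A (i + 1) * B (n + 1 - i)) := by
    have pad : (∑ i ∈ Finset.range (n + 2), (-1 : K) ^ i * qbinom q (n + 1) i * q ^ (Nat.choose i 2)
          * y ^ i * A i * B (n + 2 - i))
        = ∑ i ∈ Finset.range (n + 3), (-1 : K) ^ i * qbinom q (n + 1) i * q ^ (Nat.choose i 2)
          * y ^ i * A i * B (n + 2 - i) := by
      rw [Finset.sum_range_succ
        (fun i => (-1 : K) ^ i * qbinom q (n + 1) i * q ^ (Nat.choose i 2)
          * y ^ i * A i * B (n + 2 - i)) (n + 2),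
        qbinom_of_gt (show n + 1 < n + 2 by omega)]
      simp
    rw [pad, S]
    rw [Finset.sum_range_succ'
      (fun i => (-1 : K) ^ i * qbinom q (n + 1) i * q ^ (Nat.choose i 2)
        * y ^ i * A i * B (n + 2 - i)) (n + 2)]
    rw [Finset.sum_range_succ'
      (fun i => (-1 : K) ^ i * qbinom q (n + 2) i * q ^ (Nat.choose i 2)
        * y ^ i * A i * B (n + 2 - i)) (n + 2)]
    have e0 : ((-1 : K) ^ 0 * qbinom q (n + 1) 0 * q ^ (Nat.choose 0 2)
          * y ^ 0 * A 0 * B (n + 2 - 0))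
        = ((-1 : K) ^ 0 * qbinom q (n + 2) 0 * q ^ (Nat.choose 0 2)
          * y ^ 0 * A 0 * B (n + 2 - 0)) := by
      rw [qbinom_zero eq_ne_zero, qbinom_zero eq_ne_zero]
    rw [e0, add_right_comm, ← Finset.sum_add_distrib]
    congr 1
    apply Finset.sum_congr rfl
    intro j hj
    rw [Finset.mem_range] at hj
    have hp := qbinom_pascal eq_ne_zero (show j ≤ n + 1 by omega)
    rw [show n + 1 + 1 = n + 2 from rfl] at hp
    have hC : Nat.choose (j + 1) 2 = Nat.choose j 2 + j := by
      rw [Nat.choose_succ_succ, Nat.choose_one_right, Nat.add_comm]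
    have hqq : q ^ (n + 1 - j) * q ^ j = q ^ (n + 1) := by
      rw [← pow_add]
      congr 1
      omega
    rw [hC, show n + 2 - (j + 1) = n + 1 - j by omega, pow_add]
    linear_combination
      (-(-1 : K) ^ (j + 1) * q ^ (Nat.choose j 2) * q ^ j * y ^ (j + 1) * A (j + 1)
        * B (n + 1 - j)) * hp
      + (-(-1 : K) ^ (j + 1) * q ^ (Nat.choose j 2) * y ^ (j + 1) * A (j + 1) * B (n + 1 - j)
        * qbinom q (n + 1) j) * hqq
  linear_combination -h1 + h2 - h3 + h4 - h5

lemma S_zero : S 0 = 1 := by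
  simp [S, A, B, qbinom_zero eq_ne_zero, qbinom_zero eqi_ne_zero]

lemma S_one : S 1 = (b + d - y * (a + c) * q ^ (0 : ℕ)) * 1 := by
  simp only [S, A, B, Finset.sum_range_succ, Finset.sum_range_one]
  norm_num [qbinom_zero eq_ne_zero, qbinom_zero eqi_ne_zero,
    qbinom_self eq_ne_zero, qbinom_self eqi_ne_zero]
  ring

lemma stmt3' : ∀ m : ℕ, F m = S m := by
  intro m
  induction m using Nat.twoStepInduction with
  | zero => rw [S_zero]; rfl
  | one => rw [show F 1 = (b + d - y * (a + c) * q ^ (0 : ℕ)) * F 0 from rfl, S_one]; rfl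
  | more n ih1 ih2 =>
      rw [show F (n + 2) = (b + d - y * (a + c) * q ^ (n + 1)) * F (n + 1) +
        (q ^ (n + 1) - 1) * (b * d - a * c * q ^ n * y ^ 2) * F n from rfl, ih1, ih2, S_rec]


/-- For all `m ≥ 0`,
`F_m(y) = Σ_{i=0}^m (-1)^i [m choose i]_q q^(i choose 2) y^i A_i(a,c) B_{m-i}(b,d)`. -/
theorem stmt3 (m : ℕ) :
    F m = ∑ i ∈ Finset.range (m + 1),
      (-1 : K) ^ i * qbinom q m i * q ^ (Nat.choose i 2) * y ^ i * A i * B (m - i) :=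
  stmt3' m

end Stmt3
end
end

section
/- Let C = (c_{ij}) be a tridiagonal matrix over a commutative ring, Z_N = ⟨W| C^N |V⟩ where ⟨W| = (1,0,0,...) and |V⟩ = ⟨W|^T. Then the Hankel determinant det(Z_{2(n+1)-i-j})_{i,j=1}^{n+1}, whose entries are Z_{2n}, Z_{2n-1}, ..., Z_0, equals ∏_{r=1}^{n} k_r k'_r, where k_r = ∏_{i=0}^{r-1} c_{i,i+1} and k'_r = ∏_{i=0}^{r-1} c_{i+1,i}. -/
noncomputable section
namespace Stmt6

variable {R : Type*} [CommRing R]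

/-- The row vector `⟨W| = (1,0,0,…)`. -/
def Wrow : ℕ → R := fun i => if i = 0 then 1 else 0

/-- Right multiplication of a row vector `v` by the tridiagonal matrix `C = (c i j)`. -/
def stp (c : ℕ → ℕ → R) (v : ℕ → R) : ℕ → R := fun j =>
  (if j = 0 then 0 else v (j - 1) * c (j - 1) j) + v j * c j j + v (j + 1) * c (j + 1) j

/-- `Z_N = ⟨W| C^N |V⟩`. -/
def Z (c : ℕ → ℕ → R) (N : ℕ) : R := (stp c)^[N] Wrow 0

/-- iterated row vector -/
def u (c : ℕ → ℕ → R) (i : ℕ) : ℕ → R := (stp c)^[i] Wrow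

lemma u_zero (c : ℕ → ℕ → R) : u c 0 = Wrow := rfl

lemma u_succ (c : ℕ → ℕ → R) (i : ℕ) : u c (i + 1) = stp c (u c i) :=
  Function.iterate_succ_apply' (stp c) i Wrow

lemma u_supp (c : ℕ → ℕ → R) : ∀ i k, i < k → u c i k = 0 := by
  intro i
  induction i with
  | zero => intro k hk; simp [u_zero, Wrow]; omega
  | succ i ih =>
    intro k hk
    rw [u_succ]
    have h1 : u c i (k - 1) = 0 := ih _ (by omega)
    have h2 : u c i k = 0 := ih _ (by omega)
    have h3 : u c i (k + 1) = 0 := ih _ (by omega)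
    simp [stp, h1, h2, h3]

lemma u_diag (c : ℕ → ℕ → R) (i : ℕ) :
    u c i i = ∏ l ∈ Finset.range i, c l (l + 1) := by
  induction i with
  | zero => simp [u_zero, Wrow]
  | succ i ih =>
    rw [u_succ, Finset.prod_range_succ, ← ih]
    have h2 : u c i (i + 1) = 0 := u_supp c i _ (by omega)
    have h3 : u c i (i + 2) = 0 := u_supp c i _ (by omega)
    simp [stp, h2, h3]

/-- summation by parts / adjointness -/
lemma step_adj (c : ℕ → ℕ → R) (v w : ℕ → R) (L : ℕ)
    (hv : v (L + 1) = 0) (hw : w (L + 1) = 0) :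
    ∑ k ∈ Finset.range (L + 1), stp c v k * w k =
      ∑ k ∈ Finset.range (L + 1), v k * stp (fun i j => c j i) w k := by
  have expand : ∀ k, stp c v k * w k =
      (if k = 0 then 0 else v (k - 1) * c (k - 1) k * w k)
        + v k * c k k * w k + v (k + 1) * c (k + 1) k * w k := by
    intro k; simp [stp]; ring_nf
    by_cases h : k = 0 <;> simp [h] <;> ring
  have expand' : ∀ k, v k * stp (fun i j => c j i) w k =
      (if k = 0 then 0 else v k * c k (k - 1) * w (k - 1))
        + v k * c k k * w k + v k * c k (k + 1) * w (k + 1) := by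
    intro k; simp [stp]; ring_nf
    by_cases h : k = 0 <;> simp [h] <;> ring
  have e1 : (∑ k ∈ Finset.range (L + 1),
      (if k = 0 then 0 else v (k - 1) * c (k - 1) k * w k)) =
      ∑ k ∈ Finset.range (L + 1), v k * c k (k + 1) * w (k + 1) := by
    rw [Finset.sum_range_succ' (fun k => if k = 0 then 0 else v (k - 1) * c (k - 1) k * w k) L,
        Finset.sum_range_succ (fun k => v k * c k (k + 1) * w (k + 1)) L]
    simp [hw]
  have e2 : (∑ k ∈ Finset.range (L + 1), v (k + 1) * c (k + 1) k * w k) =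
      ∑ k ∈ Finset.range (L + 1),
        (if k = 0 then 0 else v k * c k (k - 1) * w (k - 1)) := by
    rw [Finset.sum_range_succ' (fun k => if k = 0 then 0 else v k * c k (k - 1) * w (k - 1)) L,
        Finset.sum_range_succ (fun k => v (k + 1) * c (k + 1) k * w k) L]
    simp [hv]
  simp only [expand, expand', Finset.sum_add_distrib]
  rw [e1, e2]
  ring

lemma Zkey (c : ℕ → ℕ → R) (N : ℕ) :
    ∀ j i, i + j = N →
      Z c N = ∑ k ∈ Finset.range (N + 1), u c i k * u (fun a b => c b a) j k := by
  intro j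
  induction j with
  | zero =>
    intro i hi
    subst hi
    have : ∀ k, u c i k * u (fun a b => c b a) 0 k =
        if k = 0 then u c i 0 else 0 := by
      intro k
      by_cases h : k = 0 <;> simp [h, u_zero, Wrow]
    simp only [this, Finset.sum_ite_eq' (Finset.range (i + 0 + 1)) 0]
    simp [Z, u]
  | succ j ih =>
    intro i hi
    have h1 := ih (i + 1) (by omega)
    rw [h1, u_succ]
    have := step_adj c (u c i) (u (fun a b => c b a) j) N
      (u_supp c i _ (by omega)) (u_supp _ j _ (by omega))
    rw [this, ← u_succ]

lemma Z_as_matmul (c : ℕ → ℕ → R) (n : ℕ) (i j : ℕ) (hi : i ≤ n) (hj : j ≤ n) :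
    Z c (i + j) = ∑ k ∈ Finset.range (n + 1), u c i k * u (fun a b => c b a) j k := by
  rw [Zkey c (i + j) j i rfl]
  have hL : (∑ k ∈ Finset.range (i + j + 1), u c i k * u (fun a b => c b a) j k) =
      ∑ k ∈ Finset.range (2 * n + 1), u c i k * u (fun a b => c b a) j k := by
    apply Finset.sum_subset (Finset.range_subset_range.2 (by omega))
    intro k _ hk'
    simp only [Finset.mem_range, not_lt] at hk'
    rw [u_supp c i k (by omega), zero_mul]
  have hR : (∑ k ∈ Finset.range (n + 1), u c i k * u (fun a b => c b a) j k) =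
      ∑ k ∈ Finset.range (2 * n + 1), u c i k * u (fun a b => c b a) j k := by
    apply Finset.sum_subset (Finset.range_subset_range.2 (by omega))
    intro k _ hk'
    simp only [Finset.mem_range, not_lt] at hk'
    rw [u_supp c i k (by omega), zero_mul]
  exact hL.trans hR.symm

/-- The Hankel determinant `det(Z_{2n-i-j})_{i,j=0}^{n}` equals
`∏_{r=1}^{n} ∏_{i=0}^{r-1} c_{i,i+1} c_{i+1,i}`. -/
theorem stmt6 (c : ℕ → ℕ → R)
    (htri : ∀ i j : ℕ, 1 < ((i : ℤ) - (j : ℤ)).natAbs → c i j = 0) (n : ℕ) :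
    (Matrix.of fun i j : Fin (n + 1) => Z c (2 * n - (i : ℕ) - (j : ℕ))).det =
      ∏ r ∈ Finset.range n, ∏ i ∈ Finset.range (r + 1), (c i (i + 1) * c (i + 1) i) := by
  set c' : ℕ → ℕ → R := fun a b => c b a with hc'
  set A : Matrix (Fin (n+1)) (Fin (n+1)) R := Matrix.of fun i k => u c (i : ℕ) (k : ℕ) with hA
  set B : Matrix (Fin (n+1)) (Fin (n+1)) R := Matrix.of fun j k => u c' (j : ℕ) (k : ℕ) with hB
  have hM : (Matrix.of fun i j : Fin (n + 1) => Z c ((i : ℕ) + (j : ℕ))) = A * B.transpose := by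
    ext i j
    simp only [Matrix.mul_apply, Matrix.of_apply, Matrix.transpose_apply, hA, hB]
    rw [Z_as_matmul c n i j (by omega) (by omega)]
    rw [Finset.sum_range fun k => u c (i:ℕ) k * u c' (j:ℕ) k]
  have hrev : (Matrix.of fun i j : Fin (n + 1) => Z c (2 * n - (i : ℕ) - (j : ℕ))) =
      (Matrix.of fun i j : Fin (n + 1) => Z c ((i : ℕ) + (j : ℕ))).submatrix
        Fin.revPerm Fin.revPerm := by
    ext i j
    simp only [Matrix.submatrix_apply, Matrix.of_apply, Fin.revPerm_apply, Fin.val_rev]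
    congr 1
    omega
  rw [hrev, Matrix.det_submatrix_equiv_self, hM, Matrix.det_mul, Matrix.det_transpose]
  have hdetA : A.det = ∏ i : Fin (n+1), ∏ l ∈ Finset.range (i : ℕ), c l (l + 1) := by
    rw [Matrix.det_of_lowerTriangular A (by
      intro i j hij
      exact u_supp c (i : ℕ) (j : ℕ) hij)]
    exact Finset.prod_congr rfl fun i _ => u_diag c (i : ℕ)
  have hdetB : B.det = ∏ i : Fin (n+1), ∏ l ∈ Finset.range (i : ℕ), c (l + 1) l := by
    rw [Matrix.det_of_lowerTriangular B (by
      intro i j hij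
      exact u_supp c' (i : ℕ) (j : ℕ) hij)]
    exact Finset.prod_congr rfl fun i _ => u_diag c' (i : ℕ)
  rw [hdetA, hdetB, ← Finset.prod_mul_distrib]
  simp only [← Finset.prod_mul_distrib]
  rw [Fin.prod_univ_eq_prod_range (fun i => ∏ l ∈ Finset.range i, c l (l+1) * c (l+1) l) (n+1)]
  rw [Finset.prod_range_succ' (fun i => ∏ l ∈ Finset.range i, c l (l+1) * c (l+1) l) n]
  simp

end Stmt6
end
end

section
/- Let C = (c_{ij}) be a tridiagonal matrix, ⟨W| = (1,0,0,...), |V^r⟩ the r-th standard basis column vector, Z_N = ⟨W|C^N|V^0⟩, and k_r = ∏_{i=0}^{r-1} c_{i,i+1}, assumed invertible. Then for N ≥ r ≥ 0, (1/k_r)·⟨W| C^N |V^r⟩ equals the ratio of determinants det(M^num)/det(M^den), where M^num is the (r+1)×(r+1) matrix with first row (Z_{N+r}, Z_{N+r-1}, ..., Z_N) and remaining rows given by (Z_{2r-i-j})_{i,j} for i ≥ 1, and M^den = (Z_{2r-i-j})_{i,j=0}^{r}. -/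
/-!
Since `Z_{n+m} = ⟨W|C^n · C^m|V^0⟩` and `C^m|V^0⟩` is supported on `[0, m]`, both matrices
factor as `A · B`, where `B` has columns `C^{r-j}|V^0⟩` and `A` has rows `⟨W|C^{a_i}|` cut off
after `r + 1` coordinates, with `a = (r, r-1, …, 0)` for `M^den` and `a = (N, r-1, …, 0)` for
`M^num`. As `⟨W|C^n` is supported on `[0, n]`, the last column of `A` vanishes below its first
entry, which is `⟨W|C^r|V^r⟩ = k_r` resp. `⟨W|C^N|V^r⟩`. Expanding both determinants along that
column, everything but this entry cancels in the ratio.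
-/

noncomputable section
namespace Stmt7

variable {F : Type*} [Field F]

/-- The row vector `⟨W| = (1,0,0,…)`. -/
def Wrow : ℕ → F := fun i => if i = 0 then 1 else 0

/-- Right multiplication of a row vector `v` by the tridiagonal matrix `C = (c i j)`. -/
def stp (c : ℕ → ℕ → F) (v : ℕ → F) : ℕ → F := fun j =>
  (if j = 0 then 0 else v (j - 1) * c (j - 1) j) + v j * c j j + v (j + 1) * c (j + 1) j

/-- `Z_N = ⟨W| C^N |V^0⟩`. -/
def Z (c : ℕ → ℕ → F) (N : ℕ) : F := (stp c)^[N] Wrow 0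

def stpCol (c : ℕ → ℕ → F) (w : ℕ → F) : ℕ → F := fun s =>
  w (s + 1) * c s (s + 1) + w s * c s s + (if s = 0 then 0 else w (s - 1) * c s (s - 1))

def rowPow (c : ℕ → ℕ → F) (n : ℕ) : ℕ → F := (stp c)^[n] Wrow

def colPow (c : ℕ → ℕ → F) (m : ℕ) : ℕ → F := (stpCol c)^[m] fun s => if s = 0 then 1 else 0

lemma Matrix.det_succ_of_col_last_eq_zero {R : Type*} [CommRing R] {n : ℕ}
    (M : Matrix (Fin (n + 1)) (Fin (n + 1)) R) (h : ∀ i ≠ 0, M i (Fin.last n) = 0) :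
    M.det = (-1) ^ n * M 0 (Fin.last n) * (M.submatrix Fin.succ Fin.castSucc).det := by
  rw [Matrix.det_succ_column M (Fin.last n),
    Finset.sum_eq_single_of_mem 0 (Finset.mem_univ _) fun i _ hi => by simp [h i hi]]
  simp [Fin.succAbove_zero, Fin.succAbove_last]

section

variable (c : ℕ → ℕ → F)

lemma rowPow_succ (n : ℕ) : rowPow c (n + 1) = stp c (rowPow c n) :=
  Function.iterate_succ_apply' ..

lemma colPow_succ (m : ℕ) : colPow c (m + 1) = stpCol c (colPow c m) :=
  Function.iterate_succ_apply' ..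

lemma rowPow_eq_zero_of_lt {n s : ℕ} (h : n < s) : rowPow c n s = 0 := by
  induction n generalizing s with
  | zero => simp [rowPow, Wrow, Nat.pos_iff_ne_zero.mp h]
  | succ n ih =>
    simp [rowPow_succ, stp, ih (s := s - 1) (by omega), ih (s := s) (by omega),
      ih (s := s + 1) (by omega)]

lemma colPow_eq_zero_of_lt {m s : ℕ} (h : m < s) : colPow c m s = 0 := by
  induction m generalizing s with
  | zero => simp [colPow, Nat.pos_iff_ne_zero.mp h]
  | succ m ih =>
    simp [colPow_succ, stpCol, ih (s := s - 1) (by omega), ih (s := s) (by omega),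
      ih (s := s + 1) (by omega)]

lemma rowPow_self (n : ℕ) : rowPow c n n = ∏ i ∈ Finset.range n, c i (i + 1) := by
  induction n with
  | zero => simp [rowPow, Wrow]
  | succ n ih =>
    simp [rowPow_succ, stp, rowPow_eq_zero_of_lt c (Nat.lt_succ_self n),
      rowPow_eq_zero_of_lt c (by omega : n < n + 1 + 1), ih, Finset.prod_range_succ]

lemma sum_range_stp_mul (v w : ℕ → F) (K : ℕ) :
    ∑ j ∈ Finset.range (K + 1), stp c v j * w j
      = ∑ s ∈ Finset.range (K + 1), v s * stpCol c w s
        + v (K + 1) * c (K + 1) K * w K - v K * c K (K + 1) * w (K + 1) := by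
  induction K with
  | zero =>
    simp only [zero_add, Finset.range_one, Finset.sum_singleton, stp, stpCol, ↓reduceIte, add_zero]
    ring
  | succ K ih =>
    rw [Finset.sum_range_succ, Finset.sum_range_succ (fun s => v s * stpCol c w s), ih]
    simp only [stp, stpCol, if_neg (Nat.succ_ne_zero K), Nat.add_sub_cancel]
    ring

lemma sum_range_rowPow_mul_colPow {m K : ℕ} (hK : m < K) (n : ℕ) :
    ∑ s ∈ Finset.range K, rowPow c n s * colPow c m s = Z c (n + m) := by
  induction m generalizing n with
  | zero =>
    simp [colPow, Finset.mem_range.mpr hK, Z, rowPow]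
  | succ m ih =>
    obtain ⟨K, rfl⟩ : ∃ K', K = K' + 1 := ⟨K - 1, by omega⟩
    have hsbp := sum_range_stp_mul c (rowPow c n) (colPow c m) K
    rw [colPow_eq_zero_of_lt c (by omega : m < K),
      colPow_eq_zero_of_lt c (by omega : m < K + 1), ← rowPow_succ, ih (by omega)] at hsbp
    rw [colPow_succ, show n + (m + 1) = n + 1 + m by ring, hsbp]
    simp

def colFactor (r : ℕ) : Matrix (Fin (r + 1)) (Fin (r + 1)) F :=
  Matrix.of fun s j => colPow c (r - j) s

def rowFactor (n r : ℕ) : Matrix (Fin (r + 1)) (Fin (r + 1)) F :=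
  Matrix.of fun i s => rowPow c (if (i : ℕ) = 0 then n else r - i) s

lemma of_Z_add_eq_mul {r : ℕ} (a b : Fin (r + 1) → ℕ) (hb : ∀ j, b j ≤ r) :
    Matrix.of (fun i j => Z c (a i + b j))
      = Matrix.of (fun i (s : Fin (r + 1)) => rowPow c (a i) s)
        * Matrix.of (fun (s : Fin (r + 1)) j => colPow c (b j) s) := by
  ext i j
  simp only [Matrix.mul_apply, Matrix.of_apply]
  rw [Fin.sum_univ_eq_sum_range (fun s => rowPow c (a i) s * colPow c (b j) s),
    sum_range_rowPow_mul_colPow c (Nat.lt_succ_of_le (hb j))]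

lemma hankel_updateRow_eq_mul (N r : ℕ) :
    (Matrix.of fun i j : Fin (r + 1) =>
        if (i : ℕ) = 0 then Z c (N + r - (j : ℕ)) else Z c (2 * r - (i : ℕ) - (j : ℕ)))
      = rowFactor c N r * colFactor c r := by
  rw [rowFactor, colFactor, ← of_Z_add_eq_mul c _ _ fun j => Nat.sub_le r j]
  ext i j
  have := i.isLt; have := j.isLt
  simp only [Matrix.of_apply]
  split_ifs <;> congr 1 <;> omega

lemma hankel_eq_mul (r : ℕ) :
    (Matrix.of fun i j : Fin (r + 1) => Z c (2 * r - (i : ℕ) - (j : ℕ)))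
      = rowFactor c r r * colFactor c r := by
  rw [← hankel_updateRow_eq_mul]
  ext i j
  simp only [Matrix.of_apply]
  split_ifs with hi
  · rw [hi]; congr 1; omega
  · rfl

lemma det_rowFactor (n r : ℕ) :
    (rowFactor c n r).det = (-1) ^ r * rowPow c n r
      * (Matrix.of fun (i s : Fin r) => rowPow c (r - (i + 1)) s).det := by
  refine (Matrix.det_succ_of_col_last_eq_zero _ fun i hi => ?_).trans (by congr 1)
  have hi' : (i : ℕ) ≠ 0 := Fin.val_ne_zero_iff.mpr hi
  simp only [rowFactor, Matrix.of_apply, if_neg hi', Fin.val_last]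
  exact rowPow_eq_zero_of_lt c (by omega)

end

theorem stmt7_general (c : ℕ → ℕ → F)
    (N r : ℕ)
    (hk : (∏ i ∈ Finset.range r, c i (i + 1)) ≠ 0)
    (hden : (Matrix.of fun i j : Fin (r + 1) => Z c (2 * r - (i : ℕ) - (j : ℕ))).det ≠ 0) :
    (stp c)^[N] Wrow r / (∏ i ∈ Finset.range r, c i (i + 1)) =
      (Matrix.of fun i j : Fin (r + 1) =>
          if (i : ℕ) = 0 then Z c (N + r - (j : ℕ)) else Z c (2 * r - (i : ℕ) - (j : ℕ))).det /
        (Matrix.of fun i j : Fin (r + 1) => Z c (2 * r - (i : ℕ) - (j : ℕ))).det := by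
  rw [hankel_eq_mul] at hden ⊢
  rw [hankel_updateRow_eq_mul]
  simp only [Matrix.det_mul, det_rowFactor, rowPow_self] at hden ⊢
  rw [rowPow, div_eq_div_iff hk hden]
  ring

/-- `(1/k_r) ⟨W| C^N |V^r⟩ = det(M^num)/det(M^den)` where `k_r = ∏_{i<r} c_{i,i+1}`,
the numerator matrix has first row `(Z_{N+r}, …, Z_N)` and remaining rows `Z_{2r-i-j}`,
and the denominator matrix is the Hankel matrix `(Z_{2r-i-j})_{i,j=0}^r`. -/
theorem stmt7 (c : ℕ → ℕ → F)
    (htri : ∀ i j : ℕ, 1 < ((i : ℤ) - (j : ℤ)).natAbs → c i j = 0)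
    (N r : ℕ) (hNr : r ≤ N)
    (hk : (∏ i ∈ Finset.range r, c i (i + 1)) ≠ 0)
    (hden : (Matrix.of fun i j : Fin (r + 1) => Z c (2 * r - (i : ℕ) - (j : ℕ))).det ≠ 0) :
    (stp c)^[N] Wrow r / (∏ i ∈ Finset.range r, c i (i + 1)) =
      (Matrix.of fun i j : Fin (r + 1) =>
          if (i : ℕ) = 0 then Z c (N + r - (j : ℕ)) else Z c (2 * r - (i : ℕ) - (j : ℕ))).det /
        (Matrix.of fun i j : Fin (r + 1) => Z c (2 * r - (i : ℕ) - (j : ℕ))).det :=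
  stmt7_general c N r hk hden

end Stmt7
end
end

section
/- (Jacobi–Trudi for generalized moments) Let C be a tridiagonal matrix with all superdiagonal entries nonzero, let Z_N = ⟨W|C^N|V⟩, and for a partition λ = (λ_1,...,λ_n) define K_λ = det(Z_{λ_i+2n-i-j})_{i,j=1}^n / det(Z_{2n-i-j})_{i,j=1}^n. Then K_λ = det(K_{(λ_i+j-i, 0,...,0)})_{i,j=1}^n, where the partition (λ_i+j-i, 0,...,0) has exactly n-j zeros after the first part (and K of a sequence with negative first part is 0, K of the empty partition is 1). -/
/-! Let `L` be the linear functional `x^k ↦ Z_k` on polynomials. Since the Hankel determinants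
of `Z` do not vanish, there are monic polynomials `p_r` of degree `r` with `L(x^e p_r) = 0` for
`e < r`. Unitriangular column operations replace the columns `x^{n-1-j}` of
`det(Z_{g_i+n-1-j})` by `p_{n-1-j}`. The denominator of `K_λ` then becomes triangular with
diagonal `h_r = L(x^r p_r)`, and every one-row `K_{(z,0,…,0)}` with `r` zeros becomes
`L(x^{z+r} p_r) / h_r`, which covers `z < 0` too by orthogonality. Pulling the factors
`h_r⁻¹` out of the columns of the right-hand side gives `K_λ`. -/

noncomputable section
namespace Stmt8

variable {F : Type*} [Field F]

/-- The row vector `⟨W| = (1,0,0,…)`. -/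
def Wrow : ℕ → F := fun i => if i = 0 then 1 else 0

/-- Right multiplication of a row vector `v` by the tridiagonal matrix `C = (c i j)`. -/
def stp (c : ℕ → ℕ → F) (v : ℕ → F) : ℕ → F := fun j =>
  (if j = 0 then 0 else v (j - 1) * c (j - 1) j) + v j * c j j + v (j + 1) * c (j + 1) j

/-- `Z_N = ⟨W| C^N |V⟩`. -/
def Z (c : ℕ → ℕ → F) (N : ℕ) : F := (stp c)^[N] Wrow 0

/-- For a partition `μ = (μ_1,…,μ_m)` (0-indexed here),
`K_μ = det(Z_{μ_i+2m-i-j})_{i,j=1}^m / det(Z_{2m-i-j})_{i,j=1}^m`. -/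
def Kmom (c : ℕ → ℕ → F) (m : ℕ) (μ : Fin m → ℕ) : F :=
  (Matrix.of fun i j : Fin m => Z c (μ i + (2 * m - 2 - (i : ℕ) - (j : ℕ)))).det /
    (Matrix.of fun i j : Fin m => Z c (2 * m - 2 - (i : ℕ) - (j : ℕ))).det

/-- `K` of the one-row-shape `(z, 0, …, 0)` with `r` zeros; it is `0` when `z < 0`. -/
def KH (c : ℕ → ℕ → F) (z : ℤ) (r : ℕ) : F :=
  if 0 ≤ z then Kmom c (r + 1) (fun k => if (k : ℕ) = 0 then z.toNat else 0) else 0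

section OrthogonalPolynomials

open Matrix

variable (W : ℕ → F)

def hankel (r : ℕ) : Matrix (Fin r) (Fin r) F := .of fun i j => W (i + j)

/-- Coefficients of the monic orthogonal polynomial `p_r` of the moment sequence `W`. -/
def orthoCoeff (r : ℕ) : ℕ → F := fun k =>
  if k = r then 1 else if h : k < r then
    ((hankel W r)⁻¹ *ᵥ fun e : Fin r => -W (e + r)) ⟨k, h⟩ else 0

/-- `L(x^e p_r)`. -/
def orthoPairing (e r : ℕ) : F := ∑ k ∈ Finset.range (r + 1), orthoCoeff W r k * W (e + k)

def orthoNorm (r : ℕ) : F := orthoPairing W r r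

variable {W}

@[simp]
lemma orthoCoeff_self (r : ℕ) : orthoCoeff W r r = 1 := by simp [orthoCoeff]

lemma orthoCoeff_of_lt {r k : ℕ} (h : r < k) : orthoCoeff W r k = 0 := by
  simp [orthoCoeff, h.ne', h.not_gt]

lemma orthoPairing_eq_zero {r : ℕ} (hdet : (hankel W r).det ≠ 0) {e : ℕ} (he : e < r) :
    orthoPairing W e r = 0 := by
  set b : Fin r → F := (hankel W r)⁻¹ *ᵥ fun e : Fin r => -W (e + r)
  have hsolve : hankel W r *ᵥ b = fun e : Fin r => -W (e + r) := by
    rw [Matrix.mulVec_mulVec, Matrix.mul_nonsing_inv _ (isUnit_iff_ne_zero.2 hdet),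
      Matrix.one_mulVec]
  have hrow : ∑ k : Fin r, W (e + k) * b k = -W (e + r) := by
    simpa [Matrix.mulVec, dotProduct, hankel] using congrFun hsolve ⟨e, he⟩
  have hlow : ∑ k ∈ Finset.range r, orthoCoeff W r k * W (e + k)
      = ∑ k : Fin r, W (e + k) * b k := by
    rw [← Fin.sum_univ_eq_sum_range]
    refine Finset.sum_congr rfl fun k _ => ?_
    simp [orthoCoeff, k.is_lt.ne, b, mul_comm]
  rw [orthoPairing, Finset.sum_range_succ, orthoCoeff_self, one_mul, hlow, hrow, neg_add_cancel]

variable (W) in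
/-- The column operations `x^{m-1-j} ↦ p_{m-1-j}`, by a unitriangular matrix. -/
lemma det_moment_eq_det_orthoPairing (m : ℕ) (g : Fin m → ℕ) :
    (Matrix.of fun i j : Fin m => W (g i + (m - 1 - j))).det
      = (Matrix.of fun i j : Fin m => orthoPairing W (g i) (m - 1 - j)).det := by
  set B : Matrix (Fin m) (Fin m) F := .of fun k j => orthoCoeff W (m - 1 - j) (m - 1 - k)
  have hB : B.det = 1 := by
    rw [Matrix.det_of_isLowerTriangular]
    · simp [B]
    · intro k j hkj
      rw [OrderDual.toDual_lt_toDual, Fin.lt_def] at hkj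
      exact orthoCoeff_of_lt (by omega)
  have hmul : (Matrix.of fun i j : Fin m => orthoPairing W (g i) (m - 1 - j))
      = (Matrix.of fun i j : Fin m => W (g i + (m - 1 - j))) * B := by
    ext i j
    simp only [Matrix.mul_apply, Matrix.of_apply, B, orthoPairing]
    rw [Fin.sum_univ_eq_sum_range
        (fun k => W (g i + (m - 1 - k)) * orthoCoeff W (m - 1 - j) (m - 1 - k)),
      Finset.sum_range_reflect (fun k => W (g i + k) * orthoCoeff W (m - 1 - j) k)]
    refine Finset.sum_subset_zero_on_sdiff (Finset.range_subset_range.2 (by omega))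
      (fun k hk => ?_) fun k _ => mul_comm _ _
    rw [Finset.mem_sdiff, Finset.mem_range, Finset.mem_range] at hk
    rw [orthoCoeff_of_lt (by omega), mul_zero]
  rw [hmul, Matrix.det_mul, hB, mul_one]

lemma det_orthoPairing_of_lt (hW : ∀ r, (hankel W r).det ≠ 0) {m : ℕ} {g : Fin m → ℕ}
    (hg : ∀ i j : Fin m, j < i → g i < m - 1 - j) :
    (Matrix.of fun i j : Fin m => orthoPairing W (g i) (m - 1 - j)).det
      = ∏ i : Fin m, orthoPairing W (g i) (m - 1 - i) :=
  Matrix.det_of_isUpperTriangular fun i j hji => orthoPairing_eq_zero (hW _) (hg i j hji)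

variable (W) in
lemma det_hankel_eq_det_rev (m : ℕ) :
    (hankel W m).det = (Matrix.of fun i j : Fin m => W (2 * m - 2 - i - j)).det := by
  have hrev : (Matrix.of fun i j : Fin m => W (2 * m - 2 - i - j))
      = (hankel W m).submatrix Fin.revPerm Fin.revPerm := by
    ext i j
    simp only [Matrix.submatrix_apply, Matrix.of_apply, Fin.revPerm_apply, Fin.val_rev, hankel]
    congr 1
    omega
  rw [hrev, Matrix.det_submatrix_equiv_self]

lemma det_hankel_eq_prod_orthoNorm (hW : ∀ r, (hankel W r).det ≠ 0) (m : ℕ) :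
    (hankel W m).det = ∏ i : Fin m, orthoNorm W (m - 1 - i) := by
  have hentries : (Matrix.of fun i j : Fin m => W (2 * m - 2 - i - j))
      = Matrix.of fun i j : Fin m => W ((m - 1 - i) + (m - 1 - j)) := by
    ext i j
    simp only [Matrix.of_apply]
    congr 1
    omega
  rw [det_hankel_eq_det_rev, hentries, det_moment_eq_det_orthoPairing,
    det_orthoPairing_of_lt hW fun i j hji => by rw [Fin.lt_def] at hji; omega]
  rfl

lemma orthoNorm_ne_zero (hW : ∀ r, (hankel W r).det ≠ 0) (r : ℕ) : orthoNorm W r ≠ 0 := by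
  have hprod := det_hankel_eq_prod_orthoNorm hW (r + 1) ▸ hW (r + 1)
  simpa using Finset.prod_ne_zero_iff.1 hprod 0 (Finset.mem_univ _)

end OrthogonalPolynomials

variable {c : ℕ → ℕ → F}

lemma Kmom_eq_det_orthoPairing_div (hW : ∀ r, (hankel (Z c) r).det ≠ 0) (m : ℕ)
    (μ : Fin m → ℕ) :
    Kmom c m μ =
      (Matrix.of fun i j : Fin m => orthoPairing (Z c) (μ i + (m - 1 - i)) (m - 1 - j)).det
        / ∏ i : Fin m, orthoNorm (Z c) (m - 1 - i) := by
  have hentries : (Matrix.of fun i j : Fin m => Z c (μ i + (2 * m - 2 - i - j)))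
      = Matrix.of fun i j : Fin m => Z c ((μ i + (m - 1 - i)) + (m - 1 - j)) := by
    ext i j
    simp only [Matrix.of_apply]
    congr 1
    omega
  rw [Kmom, hentries, det_moment_eq_det_orthoPairing, ← det_hankel_eq_det_rev,
    det_hankel_eq_prod_orthoNorm hW]

lemma KH_natCast_sub (hW : ∀ r, (hankel (Z c) r).det ≠ 0) (e r : ℕ) :
    KH c ((e : ℤ) - r) r = orthoPairing (Z c) e r / orthoNorm (Z c) r := by
  rcases lt_or_ge e r with hlt | hle
  · rw [KH, if_neg (by omega), orthoPairing_eq_zero (hW r) hlt, zero_div]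
  rw [KH, if_pos (by omega), Kmom_eq_det_orthoPairing_div hW,
    det_orthoPairing_of_lt hW fun i j hji => by
      have hi : (i : ℕ) ≠ 0 := by rw [Fin.lt_def] at hji; omega
      simp only [hi, if_false]
      omega,
    Fin.prod_univ_succ, Fin.prod_univ_succ]
  simp only [Fin.val_zero, Fin.val_succ, if_pos, Nat.add_one_ne_zero, if_false, zero_add,
    add_tsub_cancel_right, tsub_zero]
  rw [show ((e : ℤ) - r).toNat + r = e by omega]
  exact mul_div_mul_right _ _ (Finset.prod_ne_zero_iff.2 fun i _ => orthoNorm_ne_zero hW _)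

theorem stmt8_general (c : ℕ → ℕ → F)
    (hden : ∀ m : ℕ,
      (Matrix.of fun i j : Fin m => Z c (2 * m - 2 - (i : ℕ) - (j : ℕ))).det ≠ 0)
    (n : ℕ) (lam : Fin n → ℕ) :
    Kmom c n lam =
      (Matrix.of fun i j : Fin n =>
        KH c ((lam i : ℤ) + (j : ℕ) - (i : ℕ)) (n - 1 - (j : ℕ))).det := by
  have hW : ∀ r, (hankel (Z c) r).det ≠ 0 := fun r => det_hankel_eq_det_rev (Z c) r ▸ hden r
  set P : Matrix (Fin n) (Fin n) F :=
    .of fun i j => orthoPairing (Z c) (lam i + (n - 1 - i)) (n - 1 - j)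
  have hentries : (Matrix.of fun i j : Fin n =>
        KH c ((lam i : ℤ) + (j : ℕ) - (i : ℕ)) (n - 1 - (j : ℕ)))
      = .of fun i j => (orthoNorm (Z c) (n - 1 - j))⁻¹ * P i j := by
    ext i j
    simp only [P, Matrix.of_apply]
    rw [← div_eq_inv_mul, ← KH_natCast_sub hW]
    congr 1
    omega
  rw [Kmom_eq_det_orthoPairing_div hW, hentries, Matrix.det_mul_row, Finset.prod_inv_distrib,
    div_eq_inv_mul]

/-- Jacobi–Trudi formula: `K_λ = det(K_{(λ_i+j-i, 0,…,0)})_{i,j=1}^n`, the partition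
`(λ_i+j-i, 0,…,0)` having exactly `n-j` zeros after the first part. -/
theorem stmt8 (c : ℕ → ℕ → F)
    (htri : ∀ i j : ℕ, 1 < ((i : ℤ) - (j : ℤ)).natAbs → c i j = 0)
    (hsup : ∀ i : ℕ, c i (i + 1) ≠ 0)
    (hden : ∀ m : ℕ,
      (Matrix.of fun i j : Fin m => Z c (2 * m - 2 - (i : ℕ) - (j : ℕ))).det ≠ 0)
    (n : ℕ) (lam : Fin n → ℕ) (hlam : Antitone lam) :
    Kmom c n lam =
      (Matrix.of fun i j : Fin n =>
        KH c ((lam i : ℤ) + (j : ℕ) - (i : ℕ)) (n - 1 - (j : ℕ))).det :=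
  stmt8_general c hden n lam

end Stmt8
end
end

section
/- Define C(m,r) for integers m ≥ 0, r ≥ 0 as a doubly-indexed family in a commutative ring satisfying the recurrence C(m,r) = ((b+d - bd(a+c)q^(m+r-1))/(1 - abcd q^(m+2r-1))) C(m-1,r) + (bd(q^(m-1)-1)/(1 - abcd q^(m+2r-1))) C(m-2,r), with C(0,r) = 1 and C(m,r) = 0 for m < 0. Then C(m,r) = F_m(bd q^r) / ∏_{i=0}^{m-1}(1 - abcd q^(2r+i)), where F is defined by F_0(y)=1, F_m(y)=0 for m<0, and F_m(y) = (b+d - y(a+c)q^(m-1)) F_{m-1}(y) + (q^(m-1)-1)(bd - ac q^(m-2) y^2) F_{m-2}(y). -/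
noncomputable section
namespace Stmt12

/-- The field of rational functions in the indeterminates `a, b, c, d, q` over `ℚ`. -/
abbrev K : Type := FractionRing (MvPolynomial (Fin 5) ℚ)

def a : K := algebraMap (MvPolynomial (Fin 5) ℚ) K (MvPolynomial.X 0)
def b : K := algebraMap (MvPolynomial (Fin 5) ℚ) K (MvPolynomial.X 1)
def c : K := algebraMap (MvPolynomial (Fin 5) ℚ) K (MvPolynomial.X 2)
def d : K := algebraMap (MvPolynomial (Fin 5) ℚ) K (MvPolynomial.X 3)
def q : K := algebraMap (MvPolynomial (Fin 5) ℚ) K (MvPolynomial.X 4)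

/-- `F_0(y)=1`, `F_m(y)=0` for `m<0`, and
`F_m(y) = (b+d - y(a+c)q^(m-1)) F_{m-1}(y) + (q^(m-1)-1)(bd - ac q^(m-2) y^2) F_{m-2}(y)`
(for `m = 1` the second term vanishes since `F_{-1}=0`). -/
def F : ℕ → K → K
  | 0, _ => 1
  | 1, y => (b + d - y * (a + c) * q ^ (0 : ℕ)) * F 0 y
  | m + 2, y => (b + d - y * (a + c) * q ^ (m + 1)) * F (m + 1) y +
      (q ^ (m + 1) - 1) * (b * d - a * c * q ^ m * y ^ 2) * F m y

/-- `C(0,r)=1`, `C(m,r)=0` for `m<0`, and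
`C(m,r) = ((b+d-bd(a+c)q^(m+r-1)) C(m-1,r) + bd(q^(m-1)-1) C(m-2,r))/(1-abcd q^(m+2r-1))`. -/
def C : ℕ → ℕ → K
  | 0, _ => 1
  | 1, r => (b + d - b * d * (a + c) * q ^ r) * C 0 r / (1 - a * b * c * d * q ^ (2 * r))
  | m + 2, r => ((b + d - b * d * (a + c) * q ^ (m + r + 1)) * C (m + 1) r +
      b * d * (q ^ (m + 1) - 1) * C m r) / (1 - a * b * c * d * q ^ (m + 2 * r + 1))

lemma hne (k : ℕ) : (1 : K) - a * b * c * d * q ^ k ≠ 0 := by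
  intro h
  have h1 : a * b * c * d * q ^ k = 1 := by linear_combination -h
  have h2 : algebraMap (MvPolynomial (Fin 5) ℚ) K
      (MvPolynomial.X 0 * MvPolynomial.X 1 * MvPolynomial.X 2 * MvPolynomial.X 3 *
        MvPolynomial.X 4 ^ k) = algebraMap (MvPolynomial (Fin 5) ℚ) K 1 := by
    simpa [map_mul, map_pow, a, b, c, d, q] using h1
  have h3 := IsFractionRing.injective (MvPolynomial (Fin 5) ℚ) K h2
  have h4 := congrArg (MvPolynomial.eval (fun _ : Fin 5 => (0 : ℚ))) h3
  simp at h4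

lemma hprod (m r : ℕ) :
    (∏ i ∈ Finset.range m, ((1 : K) - a * b * c * d * q ^ (2 * r + i))) ≠ 0 :=
  Finset.prod_ne_zero_iff.mpr fun i _ => hne _

set_option maxHeartbeats 2000000 in
/-- Explicit solution of the `C`-recurrence:
`C(m,r) = F_m(bd q^r) / ∏_{i=0}^{m-1} (1 - abcd q^(2r+i))`. -/
theorem stmt12 (m r : ℕ) :
    C m r = F m (b * d * q ^ r) / ∏ i ∈ Finset.range m, (1 - a * b * c * d * q ^ (2 * r + i)) := by
  induction m using Nat.strong_induction_on with
  | _ m ih =>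
    match m with
    | 0 => simp [C, F]
    | 1 =>
      rw [C, F, Finset.prod_range_one]
      simp [C, F]
      ring_nf
    | m + 2 =>
      have e1 : m + 2 * r + 1 = 2 * r + (m + 1) := by omega
      rw [C, F, ih (m + 1) (by omega), ih m (by omega),
        e1]
      simp only [Finset.prod_range_succ]
      rw [← mul_div_assoc, ← mul_div_assoc]
      have h2 := hne (2 * r + m)
      have h3 := hne (2 * r + (m + 1))
      have h4 := hprod m r
      rw [div_add_div _ _ (mul_ne_zero h4 h2) h4, div_div,
        div_eq_div_iff (mul_ne_zero (mul_ne_zero (mul_ne_zero h4 h2) h4) h3)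
          (mul_ne_zero (mul_ne_zero h4 h2) h3)]
      ring

end Stmt12
end
end

section
/- For the tridiagonal matrix C with entries c_{i,i+1} = 1, c_{i,i} = S(x+2i), c_{i,i-1} = S^2 i (x-1+i), the generating function Motz(N,r) = ⟨W|C^N|V^r⟩ of weighted partial Motzkin paths from (0,0) to (N,r) equals S^(N-r) · binomial(N, r) · ∏_{i=r}^{N-1} (x+i). -/
noncomputable section
namespace Stmt13

variable {R : Type*} [CommRing R]

/-- The row vector `⟨W| = (1,0,0,…)`. -/
def Wrow : ℕ → R := fun i => if i = 0 then 1 else 0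

/-- Right multiplication of a row vector `v` by the tridiagonal matrix `C = (c i j)`. -/
def stp (c : ℕ → ℕ → R) (v : ℕ → R) : ℕ → R := fun j =>
  (if j = 0 then 0 else v (j - 1) * c (j - 1) j) + v j * c j j + v (j + 1) * c (j + 1) j

/-- The tridiagonal matrix with `c_{i,i+1} = 1`, `c_{i,i} = S(x+2i)`,
`c_{i,i-1} = S^2 i (x-1+i)`. -/
def c (S x : R) : ℕ → ℕ → R := fun i j =>
  if j = i + 1 then 1
  else if j = i then S * (x + 2 * (i : R))
  else if i = j + 1 then S ^ 2 * (i : R) * (x - 1 + (i : R))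
  else 0

lemma c_sub (S x : R) (s : ℕ) : c S x s (s+1) = 1 := by
  unfold c; rw [if_pos rfl]

lemma c_diag (S x : R) (r : ℕ) : c S x r r = S * (x + 2*(r:R)) := by
  unfold c; rw [if_neg (by omega), if_pos rfl]

lemma c_super (S x : R) (r : ℕ) : c S x (r+1) r = S^2 * ((r:R)+1) * (x - 1 + ((r:R)+1)) := by
  unfold c; rw [if_neg (by omega), if_neg (by omega), if_pos rfl]; push_cast; ring

lemma c_10 (S x : R) : c S x 1 0 = S^2 * (x - 1 + 1) := by
  unfold c; rw [if_neg (by omega), if_neg (by omega), if_pos rfl]; push_cast; ring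

/-- The closed form for `Motz(N,r)`, extended by `0` for `r > N`. -/
def f (S x : R) (N r : ℕ) : R :=
  if r ≤ N then S ^ (N - r) * (N.choose r : R) * ∏ i ∈ Finset.Ico r N, (x + (i : R)) else 0

lemma hchoose (N s : ℕ) :
    ((N:R)+1) * (N.choose s : R) = ((N.choose s : R) + (N.choose (s+1) : R)) * ((s:R)+1) := by
  have h := Nat.add_one_mul_choose_eq N s
  rw [Nat.choose_succ_succ] at h
  have := congrArg (Nat.cast : ℕ → R) h
  push_cast at this
  exact this

lemma hpascal (N s : ℕ) :
    (((N+1).choose (s+1) : ℕ) : R) = (N.choose s : R) + (N.choose (s+1) : R) := by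
  rw [Nat.choose_succ_succ]; push_cast; ring

lemma step (S x : R) (N : ℕ) : stp (c S x) (f S x N) = f S x (N+1) := by
  funext r
  unfold stp
  match r with
  | 0 =>
    simp only [if_pos rfl, c_diag]
    rw [c_10]
    rcases N with _ | n
    · -- N = 0
      simp only [f]
      norm_num
    · -- N = n+1
      simp only [f, if_pos (Nat.zero_le _), if_pos (by omega : 1 ≤ n+1), if_pos (Nat.zero_le _)]
      rw [Finset.prod_eq_prod_Ico_succ_bot (by omega : 0 < n+1) (fun i => x + (i:R)),
          Finset.prod_Ico_succ_top (by omega : (0:ℕ) ≤ n+1) (fun i => x + (i:R)),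
          Finset.prod_eq_prod_Ico_succ_bot (by omega : 0 < n+1) (fun i => x + (i:R))]
      have e1 : n + 1 - 0 = n + 1 := by omega
      have e2 : n + 1 - 1 = n := by omega
      have e3 : n + 1 + 1 - 0 = n + 2 := by omega
      rw [e1, e2, e3]
      simp only [zero_add, Nat.choose_zero_right, Nat.choose_one_right]
      push_cast
      ring
  | s+1 =>
    rw [if_neg (by omega), show s+1-1 = s from rfl, c_sub, c_diag,
        show s+1+1 = (s+1)+1 from rfl, c_super]
    rcases Nat.lt_or_ge N s with h | h
    · -- s > N : everything vanishes
      rw [f, if_neg (by omega), f, if_neg (by omega), f, if_neg (by omega), f, if_neg (by omega)]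
      ring
    rcases Nat.eq_or_lt_of_le h with rfl | h2
    · -- s = N
      rw [f, if_pos le_rfl, f, if_neg (by omega), f, if_neg (by omega), f, if_pos (by omega)]
      simp [Finset.Ico_self]
    rcases Nat.eq_or_lt_of_le h2 with h3 | h4
    · -- N = s+1
      subst h3
      rw [f, if_pos (by omega), f, if_pos (by omega), f, if_neg (by omega), f, if_pos (by omega)]
      have e1 : s + 1 - s = 1 := by omega
      have e2 : s + 1 - (s+1) = 0 := by omega
      have e3 : s + 1 + 1 - (s+1) = 1 := by omega
      rw [e1, e2, e3]
      simp only [Nat.choose_self, Nat.choose_succ_self_right, Finset.Ico_self]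
      rw [Finset.prod_Ico_succ_top (by omega : s ≤ s) (fun i => x + (i:R)),
          Finset.prod_Ico_succ_top (by omega : s+1 ≤ s+1) (fun i => x + (i:R))]
      rw [Finset.Ico_self, Finset.Ico_self]
      push_cast
      ring
    · -- s + 2 ≤ N : the generic case
      rw [f, if_pos (by omega), f, if_pos (by omega), f, if_pos (by omega), f, if_pos (by omega)]
      obtain ⟨t, rfl⟩ : ∃ t, N = s + 2 + t := ⟨N - (s+2), by omega⟩
      have e1 : s + 2 + t - s = t + 2 := by omega
      have e2 : s + 2 + t - (s+1) = t + 1 := by omega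
      have e3 : s + 2 + t - (s+2) = t := by omega
      have e4 : s + 2 + t + 1 - (s+1) = t + 2 := by omega
      rw [e1, e2, e3, e4]
      rw [Finset.prod_eq_prod_Ico_succ_bot (by omega : s < s+2+t) (fun i => x + (i:R)),
          Finset.prod_eq_prod_Ico_succ_bot (by omega : s+1 < s+2+t) (fun i => x + (i:R)),
          Finset.prod_Ico_succ_top (by omega : s+1 ≤ s+2+t) (fun i => x + (i:R)),
          Finset.prod_eq_prod_Ico_succ_bot (by omega : s+1 < s+2+t) (fun i => x + (i:R))]
      set P : R := ∏ i ∈ Finset.Ico (s+2) (s+2+t), (x + (i:R)) with hP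
      have h1 := hchoose (R := R) (s+2+t) s
      have h2 := hchoose (R := R) (s+2+t) (s+1)
      have h3 := hpascal (R := R) (s+2+t) s
      push_cast at h1 h2 h3 ⊢
      linear_combination (S^(t+2) * (x+(s:R)+1) * P) *
        ((-(x+(s:R)+2+t)) * h3 - h1 - h2)

lemma iter_eq (S x : R) (N : ℕ) : (stp (c S x))^[N] Wrow = f S x N := by
  induction N with
  | zero =>
    funext r
    cases r <;> simp [f, Wrow]
  | succ n ih =>
    rw [Function.iterate_succ_apply', ih, step]

/-- `Motz(N,r) = ⟨W| C^N |V^r⟩ = S^(N-r) · binom(N,r) · ∏_{i=r}^{N-1} (x+i)`. -/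
theorem stmt13 (S x : R) (N r : ℕ) (hr : r ≤ N) :
    (stp (c S x))^[N] Wrow r =
      S ^ (N - r) * (N.choose r : R) * ∏ i ∈ Finset.Ico r N, (x + (i : R)) := by
  rw [iter_eq]
  rw [f, if_pos hr]

end Stmt13
end
end

section
/- Define Z_N = ∏_{i=0}^{N-1}(x+i) · S^N where S and x are indeterminates, and for a partition λ = (λ_1,...,λ_n) let K_λ = det(Z_{λ_i+2n-i-j})_{i,j=1}^n / det(Z_{2n-i-j})_{i,j=1}^n. If ν = (λ_1,...,λ_m,0) is obtained from λ = (λ_1,...,λ_m) by appending a zero part, then K_ν = K_λ · ∏_{i=1}^m [(x+λ_i+m-i)(λ_i+m-i+1)] / [(x+i-1)·i]. -/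
noncomputable section
namespace Stmt14

/-- The field of rational functions `ℚ(S, x)`. -/
abbrev K : Type := FractionRing (MvPolynomial (Fin 2) ℚ)

def S : K := algebraMap (MvPolynomial (Fin 2) ℚ) K (MvPolynomial.X 0)
def x : K := algebraMap (MvPolynomial (Fin 2) ℚ) K (MvPolynomial.X 1)

/-- `Z_N = S^N ∏_{i=0}^{N-1} (x+i)`. -/
def Z (N : ℕ) : K := S ^ N * ∏ i ∈ Finset.range N, (x + (i : K))

/-- For a partition `μ = (μ_1,…,μ_m)` (0-indexed),
`K_μ = det(Z_{μ_i+2m-i-j})_{i,j=1}^m / det(Z_{2m-i-j})_{i,j=1}^m`. -/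
def Kmom (m : ℕ) (μ : Fin m → ℕ) : K :=
  (Matrix.of fun i j : Fin m => Z (μ i + (2 * m - 2 - (i : ℕ) - (j : ℕ)))).det /
    (Matrix.of fun i j : Fin m => Z (2 * m - 2 - (i : ℕ) - (j : ℕ))).det

lemma S_ne : S ≠ 0 := by
  simp only [S, ne_eq, map_eq_zero_iff _ (IsFractionRing.injective (MvPolynomial (Fin 2) ℚ) K)]
  exact MvPolynomial.X_ne_zero 0

lemma x_add_ne (n : ℕ) : x + (n : K) ≠ 0 := by
  have : x + (n : K) = algebraMap (MvPolynomial (Fin 2) ℚ) K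
      (MvPolynomial.X 1 + (n : MvPolynomial (Fin 2) ℚ)) := by
    simp [x, map_add, map_natCast]
  rw [this, ne_eq, map_eq_zero_iff _ (IsFractionRing.injective (MvPolynomial (Fin 2) ℚ) K)]
  intro h
  have := congrArg (MvPolynomial.coeff (Finsupp.single (1 : Fin 2) 1)) h
  have h0 : MvPolynomial.coeff (Finsupp.single (1 : Fin 2) 1)
      ((n : MvPolynomial (Fin 2) ℚ)) = 0 := by
    rw [← MvPolynomial.C_eq_coe_nat, MvPolynomial.coeff_C]
    simp [Finsupp.single_eq_zero, eq_comm]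
  rw [MvPolynomial.coeff_add, h0, MvPolynomial.coeff_X] at this
  norm_num at this

lemma Z_ne (N : ℕ) : Z N ≠ 0 := by
  apply mul_ne_zero (pow_ne_zero _ S_ne)
  exact Finset.prod_ne_zero_iff.mpr fun i _ => x_add_ne i

lemma Z_zero : Z 0 = 1 := by simp [Z]

lemma Z_add (a b : ℕ) :
    Z (a + b) = Z a * (S ^ b * ∏ t ∈ Finset.range b, (x + ((a + t : ℕ) : K))) := by
  simp only [Z, pow_add, Finset.prod_range_add]
  push_cast
  ring

lemma Z_succ (a : ℕ) : Z (a + 1) = Z a * (S * (x + (a : K))) := by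
  rw [Z_add]
  simp

open Polynomial in
def pfac (c : ℕ) : Polynomial K := ∏ t ∈ Finset.range c, (Polynomial.X + Polynomial.C (t : K))

lemma pfac_monic (c : ℕ) : (pfac c).Monic :=
  Polynomial.monic_prod_of_monic _ _ fun t _ => Polynomial.monic_X_add_C _

lemma pfac_natDegree (c : ℕ) : (pfac c).natDegree = c := by
  rw [pfac, Polynomial.natDegree_prod]
  · simp only [Polynomial.natDegree_X_add_C, Finset.sum_const, Finset.card_range, smul_eq_mul,
      mul_one]
  · intro t _; exact (Polynomial.monic_X_add_C _).ne_zero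

lemma pfac_eval (c : ℕ) (y : K) : (pfac c).eval y = ∏ t ∈ Finset.range c, (y + (t : K)) := by
  simp [pfac, Polynomial.eval_prod]

lemma det_hankel (n : ℕ) (d : Fin n → ℕ) :
    (Matrix.of fun i j : Fin n => Z (d i + (n - 1 - (j : ℕ)))).det =
      ((∏ j : Fin n, S ^ (n - 1 - (j : ℕ))) * ((Equiv.Perm.sign (Fin.revPerm (n := n)) : ℤ) : K)) *
        ((∏ i, Z (d i)) * ∏ i : Fin n, ∏ j ∈ Finset.Ioi i, ((d j : K) - (d i : K))) := by
  set v : Fin n → K := fun i => x + (d i : K) with hv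
  have entry : ∀ i j : Fin n, Z (d i + (n - 1 - (j : ℕ))) =
      Z (d i) * (S ^ (n - 1 - (j : ℕ)) * (pfac (n - 1 - (j : ℕ))).eval (v i)) := by
    intro i j
    rw [Z_add, pfac_eval]
    congr 2
    apply Finset.prod_congr rfl
    intro t _
    simp only [hv]; push_cast; ring
  have h1 : (Matrix.of fun i j : Fin n => Z (d i + (n - 1 - (j : ℕ)))) =
      Matrix.of fun i j => Z (d i) *
        ((Matrix.of fun i j : Fin n => S ^ (n - 1 - (j : ℕ)) *
          ((Matrix.of fun i j : Fin n => (pfac (n - 1 - (j : ℕ))).eval (v i)) i j)) i j) := by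
    ext i j; simpa using entry i j
  rw [h1, Matrix.det_mul_column, Matrix.det_mul_row]
  have h2 : (Matrix.of fun i j : Fin n => (pfac (n - 1 - (j : ℕ))).eval (v i)) =
      (Matrix.of fun i j : Fin n => (pfac (j : ℕ)).eval (v i)).submatrix id Fin.revPerm := by
    ext i j
    simp [Matrix.submatrix, Fin.val_rev]
    congr 2
    omega
  rw [h2, Matrix.det_permute',
    ← Matrix.det_eval_matrixOfPolynomials_eq_det_vandermonde v (fun j => pfac (j : ℕ))
      (fun j => pfac_natDegree _) (fun j => pfac_monic _),
    Matrix.det_vandermonde]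
  have h3 : ∀ i : Fin n, ∀ j ∈ Finset.Ioi i, v j - v i = (d j : K) - (d i : K) := by
    intro i j _; simp only [hv]; ring
  rw [Finset.prod_congr rfl fun i _ => Finset.prod_congr rfl (h3 i)]
  push_cast
  ring

lemma Kmom_eq (m : ℕ) (μ : Fin m → ℕ) :
    Kmom m μ =
      ((∏ i : Fin m, Z (μ i + (m - 1 - (i : ℕ)))) *
          ∏ i : Fin m, ∏ j ∈ Finset.Ioi i,
            (((μ j + (m - 1 - (j : ℕ)) : ℕ) : K) - ((μ i + (m - 1 - (i : ℕ)) : ℕ) : K))) /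
        ((∏ i : Fin m, Z (m - 1 - (i : ℕ))) *
          ∏ i : Fin m, ∏ j ∈ Finset.Ioi i,
            (((m - 1 - (j : ℕ) : ℕ) : K) - ((m - 1 - (i : ℕ) : ℕ) : K))) := by
  have hnum : (Matrix.of fun i j : Fin m => Z (μ i + (2 * m - 2 - (i : ℕ) - (j : ℕ)))) =
      Matrix.of fun i j : Fin m =>
        Z ((fun i : Fin m => μ i + (m - 1 - (i : ℕ))) i + (m - 1 - (j : ℕ))) := by
    ext i j
    have hi := i.isLt; have hj := j.isLt
    have h : μ i + (2 * m - 2 - (i : ℕ) - (j : ℕ)) =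
        μ i + (m - 1 - (i : ℕ)) + (m - 1 - (j : ℕ)) := by omega
    simp only [Matrix.of_apply, h]
  have hden : (Matrix.of fun i j : Fin m => Z (2 * m - 2 - (i : ℕ) - (j : ℕ))) =
      Matrix.of fun i j : Fin m =>
        Z ((fun i : Fin m => m - 1 - (i : ℕ)) i + (m - 1 - (j : ℕ))) := by
    ext i j
    have hi := i.isLt; have hj := j.isLt
    have h : 2 * m - 2 - (i : ℕ) - (j : ℕ) = m - 1 - (i : ℕ) + (m - 1 - (j : ℕ)) := by omega
    simp only [Matrix.of_apply, h]
  have hc : ((∏ j : Fin m, S ^ (m - 1 - (j : ℕ))) *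
      ((Equiv.Perm.sign (Fin.revPerm (n := m)) : ℤ) : K)) ≠ 0 := by
    apply mul_ne_zero
    · exact Finset.prod_ne_zero_iff.mpr fun i _ => pow_ne_zero _ S_ne
    · rcases Int.units_eq_one_or (Equiv.Perm.sign (Fin.revPerm (n := m))) with h | h <;>
        rw [h] <;> norm_num
  rw [Kmom, hnum, hden, det_hankel, det_hankel, mul_div_mul_left _ _ hc]

lemma prod_Ioi_ite {N : ℕ} (i : Fin N) (h : Fin N → K) :
    ∏ j ∈ Finset.Ioi i, h j = ∏ j : Fin N, if i < j then h j else 1 := by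
  rw [← Finset.prod_filter]
  congr 1
  ext j
  simp

lemma prod_Ioi_split {n : ℕ} (g : Fin (n + 1) → Fin (n + 1) → K) :
    (∏ i : Fin (n + 1), ∏ j ∈ Finset.Ioi i, g i j) =
      (∏ i : Fin n, ∏ j ∈ Finset.Ioi i, g i.castSucc j.castSucc) *
        ∏ i : Fin n, g i.castSucc (Fin.last n) := by
  simp only [prod_Ioi_ite]
  rw [Fin.prod_univ_castSucc]
  have hlast : (∏ j : Fin (n + 1), if Fin.last n < j then g (Fin.last n) j else 1) = 1 :=
    Finset.prod_eq_one fun j _ => if_neg (not_lt.mpr (Fin.le_last j))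
  rw [hlast, mul_one]
  have hin : ∀ i : Fin n,
      (∏ j : Fin (n + 1), if i.castSucc < j then g i.castSucc j else 1) =
        (∏ j ∈ Finset.Ioi i, g i.castSucc j.castSucc) * g i.castSucc (Fin.last n) := by
    intro i
    rw [Fin.prod_univ_castSucc]
    congr 1
    · rw [prod_Ioi_ite i (fun j => g i.castSucc j.castSucc)]
      apply Finset.prod_congr rfl
      intro j _
      simp [Fin.castSucc_lt_castSucc_iff]
    · rw [if_pos (Fin.castSucc_lt_last i)]
  rw [Finset.prod_congr rfl fun i _ => hin i, Finset.prod_mul_distrib]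
  simp only [prod_Ioi_ite]

lemma prod_rev (f : ℕ → K) (m : ℕ) :
    (∏ i : Fin m, f (m - 1 - (i : ℕ))) = ∏ i : Fin m, f (i : ℕ) := by
  apply Fintype.prod_equiv Fin.revPerm
  intro i
  congr 1
  have := i.isLt
  simp [Fin.revPerm, Fin.val_rev]
  omega

set_option maxHeartbeats 2000000

/-- If `ν = (λ_1,…,λ_m,0)` is obtained from `λ` by appending a zero part, then
`K_ν = K_λ · ∏_{i=1}^m (x+λ_i+m-i)(λ_i+m-i+1) / ((x+i-1)·i)`. -/
theorem stmt14 (m : ℕ) (lam : Fin m → ℕ) (hlam : Antitone lam) :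
    Kmom (m + 1) (Fin.snoc lam 0) =
      Kmom m lam *
        ∏ i : Fin m,
          (x + (lam i : K) + ((m - 1 - (i : ℕ) : ℕ) : K)) *
              ((lam i + (m - (i : ℕ)) : ℕ) : K) /
            ((x + ((i : ℕ) : K)) * (((i : ℕ) : K) + 1)) := by
  rw [Kmom_eq, Kmom_eq]
  -- the four structural identities
  have e1 : (∏ i : Fin (m + 1), Z ((Fin.snoc lam 0 : Fin (m + 1) → ℕ) i + (m + 1 - 1 - (i : ℕ)))) =
      (∏ i : Fin m, Z (lam i + (m - 1 - (i : ℕ)))) *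
        (S ^ m * ∏ i : Fin m, (x + (lam i : K) + ((m - 1 - (i : ℕ) : ℕ) : K))) := by
    rw [Fin.prod_univ_castSucc]
    have hterm : ∀ i : Fin m, Z ((Fin.snoc lam 0 : Fin (m + 1) → ℕ) i.castSucc + (m + 1 - 1 - (i.castSucc : ℕ))) =
        Z (lam i + (m - 1 - (i : ℕ))) *
          (S * (x + (lam i : K) + ((m - 1 - (i : ℕ) : ℕ) : K))) := by
      intro i
      have hi := i.isLt
      have h12 : (Fin.snoc lam 0 : Fin (m + 1) → ℕ) i.castSucc + (m + 1 - 1 - (i.castSucc : ℕ)) =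
          lam i + (m - 1 - (i : ℕ)) + 1 := by
        simp only [Fin.snoc_castSucc, Fin.coe_castSucc]; omega
      rw [h12, Z_succ]
      push_cast
      ring
    have hl : Z ((Fin.snoc lam 0 : Fin (m + 1) → ℕ) (Fin.last m) + (m + 1 - 1 - ((Fin.last m : Fin (m + 1)) : ℕ))) =
        1 := by
      have h0 : (Fin.snoc lam 0 : Fin (m + 1) → ℕ) (Fin.last m) + (m + 1 - 1 - ((Fin.last m : Fin (m + 1)) : ℕ)) =
          0 := by simp
      rw [h0, Z_zero]
    rw [Finset.prod_congr rfl fun i _ => hterm i, hl, mul_one, Finset.prod_mul_distrib,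
      Finset.prod_mul_distrib, Finset.prod_const, Finset.card_univ, Fintype.card_fin]
  have e2 : (∏ i : Fin (m + 1), Z (m + 1 - 1 - (i : ℕ))) =
      (∏ i : Fin m, Z (m - 1 - (i : ℕ))) * (S ^ m * ∏ i : Fin m, (x + ((i : ℕ) : K))) := by
    rw [Fin.prod_univ_castSucc]
    have hterm : ∀ i : Fin m, Z (m + 1 - 1 - (i.castSucc : ℕ)) =
        Z (m - 1 - (i : ℕ)) * (S * (x + ((m - 1 - (i : ℕ) : ℕ) : K))) := by
      intro i
      have hi := i.isLt
      have h2 : m + 1 - 1 - (i.castSucc : ℕ) = m - 1 - (i : ℕ) + 1 := by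
        simp only [Fin.coe_castSucc]; omega
      rw [h2, Z_succ]
    have hl : Z (m + 1 - 1 - ((Fin.last m : Fin (m + 1)) : ℕ)) = 1 := by
      have : m + 1 - 1 - ((Fin.last m : Fin (m + 1)) : ℕ) = 0 := by simp
      rw [this, Z_zero]
    rw [Finset.prod_congr rfl fun i _ => hterm i, hl, mul_one, Finset.prod_mul_distrib,
      Finset.prod_mul_distrib, Finset.prod_const, Finset.card_univ, Fintype.card_fin,
      prod_rev (fun k => x + (k : K)) m]
  have e3 : (∏ i : Fin (m + 1), ∏ j ∈ Finset.Ioi i,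
        ((((Fin.snoc lam 0 : Fin (m + 1) → ℕ) j + (m + 1 - 1 - (j : ℕ)) : ℕ) : K) -
          (((Fin.snoc lam 0 : Fin (m + 1) → ℕ) i + (m + 1 - 1 - (i : ℕ)) : ℕ) : K))) =
      (∏ i : Fin m, ∏ j ∈ Finset.Ioi i,
          (((lam j + (m - 1 - (j : ℕ)) : ℕ) : K) - ((lam i + (m - 1 - (i : ℕ)) : ℕ) : K))) *
        ((-1 : K) ^ m * ∏ i : Fin m, ((lam i + (m - (i : ℕ)) : ℕ) : K)) := by
    rw [prod_Ioi_split]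
    congr 1
    · apply Finset.prod_congr rfl
      intro i _
      apply Finset.prod_congr rfl
      intro j _
      have hi := i.isLt; have hj := j.isLt
      have h1 : (Fin.snoc lam 0 : Fin (m + 1) → ℕ) j.castSucc + (m + 1 - 1 - (j.castSucc : ℕ)) =
          lam j + (m - 1 - (j : ℕ)) + 1 := by
        simp only [Fin.snoc_castSucc, Fin.coe_castSucc]; omega
      have h2 : (Fin.snoc lam 0 : Fin (m + 1) → ℕ) i.castSucc + (m + 1 - 1 - (i.castSucc : ℕ)) =
          lam i + (m - 1 - (i : ℕ)) + 1 := by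
        simp only [Fin.snoc_castSucc, Fin.coe_castSucc]; omega
      rw [h1, h2]
      push_cast
      ring
    · have hterm : ∀ i : Fin m,
          ((((Fin.snoc lam 0 : Fin (m + 1) → ℕ) (Fin.last m) + (m + 1 - 1 - ((Fin.last m : Fin (m + 1)) : ℕ)) : ℕ) : K) -
            (((Fin.snoc lam 0 : Fin (m + 1) → ℕ) i.castSucc + (m + 1 - 1 - (i.castSucc : ℕ)) : ℕ) : K)) =
          (-1 : K) * ((lam i + (m - (i : ℕ)) : ℕ) : K) := by
        intro i
        have hi := i.isLt
        have h1 : (Fin.snoc lam 0 : Fin (m + 1) → ℕ) (Fin.last m) +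
            (m + 1 - 1 - ((Fin.last m : Fin (m + 1)) : ℕ)) = 0 := by simp
        have h2 : (Fin.snoc lam 0 : Fin (m + 1) → ℕ) i.castSucc + (m + 1 - 1 - (i.castSucc : ℕ)) =
            lam i + (m - (i : ℕ)) := by
          simp only [Fin.snoc_castSucc, Fin.coe_castSucc]; omega
        rw [h1, h2]
        push_cast
        ring
      rw [Finset.prod_congr rfl fun i _ => hterm i, Finset.prod_mul_distrib, Finset.prod_const,
        Finset.card_univ, Fintype.card_fin]
  have e4 : (∏ i : Fin (m + 1), ∏ j ∈ Finset.Ioi i,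
        (((m + 1 - 1 - (j : ℕ) : ℕ) : K) - ((m + 1 - 1 - (i : ℕ) : ℕ) : K))) =
      (∏ i : Fin m, ∏ j ∈ Finset.Ioi i,
          (((m - 1 - (j : ℕ) : ℕ) : K) - ((m - 1 - (i : ℕ) : ℕ) : K))) *
        ((-1 : K) ^ m * ∏ i : Fin m, (((i : ℕ) : K) + 1)) := by
    rw [prod_Ioi_split]
    congr 1
    · apply Finset.prod_congr rfl
      intro i _
      apply Finset.prod_congr rfl
      intro j _
      have hi := i.isLt; have hj := j.isLt
      have h1 : m + 1 - 1 - (j.castSucc : ℕ) = m - 1 - (j : ℕ) + 1 := by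
        simp only [Fin.coe_castSucc]; omega
      have h2 : m + 1 - 1 - (i.castSucc : ℕ) = m - 1 - (i : ℕ) + 1 := by
        simp only [Fin.coe_castSucc]; omega
      rw [h1, h2]
      push_cast
      ring
    · have hterm : ∀ i : Fin m,
          (((m + 1 - 1 - ((Fin.last m : Fin (m + 1)) : ℕ) : ℕ) : K) -
            ((m + 1 - 1 - (i.castSucc : ℕ) : ℕ) : K)) =
          (-1 : K) * (((m - 1 - (i : ℕ) : ℕ) : K) + 1) := by
        intro i
        have hi := i.isLt
        have h1 : m + 1 - 1 - ((Fin.last m : Fin (m + 1)) : ℕ) = 0 := by simp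
        have h2 : m + 1 - 1 - (i.castSucc : ℕ) = (m - 1 - (i : ℕ)) + 1 := by
          simp only [Fin.coe_castSucc]; omega
        rw [h1, h2]
        push_cast
        ring
      rw [Finset.prod_congr rfl fun i _ => hterm i, Finset.prod_mul_distrib, Finset.prod_const,
        Finset.card_univ, Fintype.card_fin,
        prod_rev (fun k => ((k : K) + 1)) m]
  have e5 : (∏ i : Fin m,
        (x + (lam i : K) + ((m - 1 - (i : ℕ) : ℕ) : K)) * ((lam i + (m - (i : ℕ)) : ℕ) : K) /
          ((x + ((i : ℕ) : K)) * (((i : ℕ) : K) + 1))) =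
      ((∏ i : Fin m, (x + (lam i : K) + ((m - 1 - (i : ℕ) : ℕ) : K))) *
          ∏ i : Fin m, ((lam i + (m - (i : ℕ)) : ℕ) : K)) /
        ((∏ i : Fin m, (x + ((i : ℕ) : K))) * ∏ i : Fin m, (((i : ℕ) : K) + 1)) := by
    rw [Finset.prod_div_distrib, Finset.prod_mul_distrib, Finset.prod_mul_distrib]
  rw [e1, e2, e3, e4, e5, div_mul_div_comm]
  -- nonvanishing facts
  have hB : (∏ i : Fin m, Z (m - 1 - (i : ℕ))) ≠ 0 :=
    Finset.prod_ne_zero_iff.mpr fun i _ => Z_ne _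
  have hP2 : (∏ i : Fin m, (x + ((i : ℕ) : K))) ≠ 0 :=
    Finset.prod_ne_zero_iff.mpr fun i _ => x_add_ne _
  have hQ2 : (∏ i : Fin m, (((i : ℕ) : K) + 1)) ≠ 0 := by
    refine Finset.prod_ne_zero_iff.mpr fun i _ => ?_
    exact_mod_cast (Nat.cast_add_one_ne_zero (R := K) (i : ℕ))
  have hVd : (∏ i : Fin m, ∏ j ∈ Finset.Ioi i,
      (((m - 1 - (j : ℕ) : ℕ) : K) - ((m - 1 - (i : ℕ) : ℕ) : K))) ≠ 0 := by
    refine Finset.prod_ne_zero_iff.mpr fun i _ => Finset.prod_ne_zero_iff.mpr fun j hj => ?_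
    rw [Finset.mem_Ioi] at hj
    have hij : (i : ℕ) < (j : ℕ) := hj
    have hi := i.isLt; have hjm := j.isLt
    refine sub_ne_zero_of_ne ?_
    intro h
    have : (m - 1 - (j : ℕ)) = (m - 1 - (i : ℕ)) := Nat.cast_injective h
    omega
  have hden1 : ((∏ i : Fin m, Z (m - 1 - (i : ℕ))) *
      (S ^ m * ∏ i : Fin m, (x + ((i : ℕ) : K)))) *
      ((∏ i : Fin m, ∏ j ∈ Finset.Ioi i,
          (((m - 1 - (j : ℕ) : ℕ) : K) - ((m - 1 - (i : ℕ) : ℕ) : K))) *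
        ((-1 : K) ^ m * ∏ i : Fin m, (((i : ℕ) : K) + 1))) ≠ 0 := by
    apply mul_ne_zero (mul_ne_zero hB (mul_ne_zero (pow_ne_zero _ S_ne) hP2))
    exact mul_ne_zero hVd (mul_ne_zero (pow_ne_zero _ (by norm_num)) hQ2)
  have hden2 : ((∏ i : Fin m, Z (m - 1 - (i : ℕ))) *
      ∏ i : Fin m, ∏ j ∈ Finset.Ioi i,
        (((m - 1 - (j : ℕ) : ℕ) : K) - ((m - 1 - (i : ℕ) : ℕ) : K))) *
      ((∏ i : Fin m, (x + ((i : ℕ) : K))) * ∏ i : Fin m, (((i : ℕ) : K) + 1)) ≠ 0 :=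
    mul_ne_zero (mul_ne_zero hB hVd) (mul_ne_zero hP2 hQ2)
  rw [div_eq_div_iff hden1 hden2]
  ring

end Stmt14
end
end

section
/- Suppose ⟨W|, |V⟩, and operators d, e, A satisfy: d e = q e d + (1-q)·1, d|V⟩ = (b+d')|V⟩ - b d' e|V⟩ (writing the scalar parameters as b and d'), ⟨W|e = (a+c)⟨W| - a c ⟨W|d, dA = qAd, and Ae = qeA. Then the quantities G(r,m) := ⟨W|A^r d^m|V⟩ satisfy (1 - abcd' q^(m+2r-1)) G(r,m) = (b + d' - bd'(a+c) q^(m+r-1)) G(r,m-1) + bd'(q^(m-1)-1) G(r,m-2) for all m ≥ 2. -/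
namespace Stmt19

/-- The three-term recurrence for `G(r,m) = ⟨W|A^r d^m|V⟩`, derived from the relations
`de = q ed + (1-q)·1`, `d|V⟩ = (b+d')|V⟩ - b d' e|V⟩`, `⟨W|e = (a+c)⟨W| - a c ⟨W|d`,
`dA = qAd`, `Ae = qeA`.  Here the operators act on a module `M`, `V : M` is the column
vector and `W : M →ₗ[S] S` is the row vector (a linear functional). -/
theorem stmt19 {S : Type*} [CommRing S] {M : Type*} [AddCommGroup M] [Module S M]
    (a b c d' q : S) (d e A : Module.End S M) (W : M →ₗ[S] S) (V : M)
    (h1 : d * e = q • (e * d) + (1 - q) • (1 : Module.End S M))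
    (h2 : d V = (b + d') • V - (b * d') • (e V))
    (h3 : ∀ v : M, W (e v) = (a + c) * W v - (a * c) * W (d v))
    (h4 : d * A = q • (A * d))
    (h5 : A * e = q • (e * A))
    (r m : ℕ) (hm : 2 ≤ m) :
    (1 - a * b * c * d' * q ^ (m + 2 * r - 1)) * W ((A ^ r * d ^ m) V) =
      (b + d' - b * d' * (a + c) * q ^ (m + r - 1)) * W ((A ^ r * d ^ (m - 1)) V) +
        b * d' * (q ^ (m - 1) - 1) * W ((A ^ r * d ^ (m - 2)) V) := by
  -- pointwise versions of the relations
  have F1 : ∀ v : M, d (e v) = q • e (d v) + (1 - q) • v := by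
    intro v
    have := congrArg (fun f : Module.End S M => f v) h1
    simpa [Module.End.mul_apply] using this
  have F4 : ∀ v : M, d (A v) = q • A (d v) := by
    intro v
    have := congrArg (fun f : Module.End S M => f v) h4
    simpa [Module.End.mul_apply] using this
  have F5 : ∀ v : M, A (e v) = q • e (A v) := by
    intro v
    have := congrArg (fun f : Module.End S M => f v) h5
    simpa [Module.End.mul_apply] using this
  -- d commutes past A^r
  have P4 : ∀ (n : ℕ) (v : M), d ((A ^ n) v) = q ^ n • (A ^ n) (d v) := by
    intro n
    induction n with
    | zero => intro v; simp
    | succ n ih =>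
      intro v
      have h : (A ^ (n + 1)) v = (A ^ n) (A v) := by
        rw [pow_succ, Module.End.mul_apply]
      rw [h, ih (A v)]
      have h' : (A ^ (n + 1)) (d v) = (A ^ n) (A (d v)) := by
        rw [pow_succ, Module.End.mul_apply]
      rw [h']
      rw [F4 v, map_smul, smul_smul, pow_succ]
  -- A^n commutes past e
  have P5 : ∀ (n : ℕ) (v : M), (A ^ n) (e v) = q ^ n • e ((A ^ n) v) := by
    intro n
    induction n with
    | zero => intro v; simp
    | succ n ih =>
      intro v
      have h : (A ^ (n + 1)) (e v) = A ((A ^ n) (e v)) := by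
        rw [pow_succ', Module.End.mul_apply]
      have h' : (A ^ (n + 1)) v = A ((A ^ n) v) := by
        rw [pow_succ', Module.End.mul_apply]
      rw [h, ih v, map_smul, F5, h', smul_smul, pow_succ]
  -- d^(k+1) past e
  have P1 : ∀ (k : ℕ) (v : M),
      (d ^ (k + 1)) (e v)
        = q ^ (k + 1) • e ((d ^ (k + 1)) v) + (1 - q ^ (k + 1)) • (d ^ k) v := by
    intro k
    induction k with
    | zero => intro v; simpa [Module.End.mul_apply] using F1 v
    | succ n ih =>
      intro v
      have h : (d ^ (n + 2)) (e v) = d ((d ^ (n + 1)) (e v)) := by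
        rw [pow_succ', Module.End.mul_apply]
      rw [h, ih v, map_add, map_smul, map_smul]
      rw [F1 ((d ^ (n + 1)) v)]
      have h2' : d ((d ^ (n + 1)) v) = (d ^ (n + 2)) v := by
        rw [pow_succ' d (n + 1), Module.End.mul_apply]
      have h3' : d ((d ^ n) v) = (d ^ (n + 1)) v := by
        rw [pow_succ', Module.End.mul_apply]
      rw [h2', h3', smul_add, smul_smul, smul_smul]
      rw [show q ^ (n + 1) * q = q ^ (n + 2) by ring]
      rw [show (1 : S) - q ^ (n + 2)
            = q ^ (n + 1) * (1 - q) + (1 - q ^ (n + 1)) by ring]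
      module
  -- reduce m to k + 2
  obtain ⟨k, rfl⟩ : ∃ k, m = k + 2 := ⟨m - 2, by omega⟩
  have e1 : k + 2 + 2 * r - 1 = k + 2 * r + 1 := by omega
  have e2 : k + 2 + r - 1 = k + r + 1 := by omega
  have e3 : k + 2 - 1 = k + 1 := rfl
  have e4 : k + 2 - 2 = k := rfl
  rw [e1, e2, e3, e4]
  -- abbreviations
  set g2 := W ((A ^ r * d ^ (k + 2)) V) with hg2
  set g1 := W ((A ^ r * d ^ (k + 1)) V) with hg1
  set g0 := W ((A ^ r * d ^ k) V) with hg0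
  -- key computation
  have key : g2 = (b + d') * g1
      - (b * d') * (q ^ (k + 1) * (q ^ r * ((a + c) * g1 - a * c * (q ^ r * g2)))
        + (1 - q ^ (k + 1)) * g0) := by
    have step1 : (d ^ (k + 2)) V
        = (b + d') • (d ^ (k + 1)) V - (b * d') • ((d ^ (k + 1)) (e V)) := by
      have : (d ^ (k + 2)) V = (d ^ (k + 1)) (d V) := by
        rw [pow_succ, Module.End.mul_apply]
      rw [this, h2, map_sub, map_smul, map_smul]
    have step2 := P1 k V
    -- W of d (A^r y1) where y1 = d^(k+1) V
    have wd : W (d ((A ^ r) ((d ^ (k + 1)) V))) = q ^ r * g2 := by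
      rw [P4 r ((d ^ (k + 1)) V), map_smul]
      have : d ((d ^ (k + 1)) V) = (d ^ (k + 2)) V := by
        rw [pow_succ' d (k + 1), Module.End.mul_apply]
      rw [this, smul_eq_mul, hg2, Module.End.mul_apply]
    have we : W ((A ^ r) (e ((d ^ (k + 1)) V)))
        = q ^ r * ((a + c) * g1 - a * c * (q ^ r * g2)) := by
      rw [P5 r, map_smul, smul_eq_mul, h3, wd, hg1, Module.End.mul_apply]
    calc g2 = W ((A ^ r) ((d ^ (k + 2)) V)) := by rw [hg2, Module.End.mul_apply]
      _ = (b + d') * g1 - (b * d') * W ((A ^ r) ((d ^ (k + 1)) (e V))) := by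
          rw [step1, map_sub, map_smul, map_smul, map_sub, map_smul, map_smul,
            smul_eq_mul, smul_eq_mul, hg1, Module.End.mul_apply]
      _ = (b + d') * g1
          - (b * d') * (q ^ (k + 1) * (q ^ r * ((a + c) * g1 - a * c * (q ^ r * g2)))
            + (1 - q ^ (k + 1)) * g0) := by
          rw [step2, map_add, map_smul, map_smul, map_add, map_smul, map_smul,
            smul_eq_mul, smul_eq_mul, we, hg0, Module.End.mul_apply]
  linear_combination key
end Stmt19
end
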